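/- arXiv:1809.10960 — 4 statements merged into one kernel-verified Lean document; each statement's English description precedes it below -/
import Mathlib

section
/- Let (u,v,w) be a classical solution of (P) on Ω × (0,T) for some T ∈ (0,∞]. Then for all t ∈ (0,T), ∫_a^b u(·,t) + ∫_a^b v(·,t) ≤ max{ ∫_a^b u₀ + ∫_a^b v₀ , κ(b−a) }. -/
open Set MeasureTheory Filter
open scoped ENNReal

noncomputable section

/-- Spatial partial derivative of a function `g = g(x, t)`. -/
def pdx (g : ℝ → ℝ → ℝ) : ℝ → ℝ → ℝ := fun x t => deriv (fun ξ => g ξ t) x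

/-- Time partial derivative of a function `g = g(x, t)`. -/
def pdt (g : ℝ → ℝ → ℝ) : ℝ → ℝ → ℝ := fun x t => deriv (fun τ => g x τ) t

/-- The time interval `(0, T)` for `T ∈ (0, ∞]` (encoded as `T : ℝ≥0∞`). -/
def timeIoo (T : ℝ≥0∞) : Set ℝ := {t : ℝ | 0 < t ∧ ENNReal.ofReal t < T}

/-- The time interval `[0, T)` for `T ∈ (0, ∞]` (encoded as `T : ℝ≥0∞`). -/
def timeIco (T : ℝ≥0∞) : Set ℝ := {t : ℝ | 0 ≤ t ∧ ENNReal.ofReal t < T}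

/-- `‖φ‖_{L^q}` on the interval `(a, b)`, for `q ∈ [1, ∞)`. -/
def LqNorm (a b q : ℝ) (φ : ℝ → ℝ) : ℝ := (∫ x in a..b, |φ x| ^ q) ^ (1 / q)

/-- `‖φ‖_{L^∞}`: the supremum norm on `[a, b]`. -/
def LinfNorm (a b : ℝ) (φ : ℝ → ℝ) : ℝ := sSup ((fun x => |φ x|) '' Icc a b)

/-- A (nonnegative) classical solution of the system (P) on `(a,b) × (0,T)`, `T ∈ (0,∞]`,
with parameter `κ`, conversion function `f` and initial data `u₀, v₀, w₀`. -/
structure IsClassicalSolutionP (a b κ : ℝ) (f : ℝ → ℝ) (u₀ v₀ w₀ : ℝ → ℝ)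
    (T : ℝ≥0∞) (u v w : ℝ → ℝ → ℝ) : Prop where
  u_nonneg : ∀ x ∈ Icc a b, ∀ t ∈ timeIco T, 0 ≤ u x t
  v_nonneg : ∀ x ∈ Icc a b, ∀ t ∈ timeIco T, 0 ≤ v x t
  w_nonneg : ∀ x ∈ Icc a b, ∀ t ∈ timeIco T, 0 ≤ w x t
  u_cont : ContinuousOn (fun p : ℝ × ℝ => u p.1 p.2) (Icc a b ×ˢ timeIco T)
  v_cont : ContinuousOn (fun p : ℝ × ℝ => v p.1 p.2) (Icc a b ×ˢ timeIco T)
  w_cont : ContinuousOn (fun p : ℝ × ℝ => w p.1 p.2) (Icc a b ×ˢ timeIco T)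
  u_init : ∀ x ∈ Icc a b, u x 0 = u₀ x
  v_init : ∀ x ∈ Icc a b, v x 0 = v₀ x
  w_init : ∀ x ∈ Icc a b, w x 0 = w₀ x
  -- existence of the partial derivatives u_t, u_x, u_xx, v_t, v_x, v_xx, w_t, w_x, w_xx
  u_diff_t : ∀ x ∈ Icc a b, ∀ t ∈ timeIoo T, DifferentiableAt ℝ (fun τ => u x τ) t
  u_diff_x : ∀ x ∈ Icc a b, ∀ t ∈ timeIoo T, DifferentiableAt ℝ (fun ξ => u ξ t) x
  u_diff_xx : ∀ x ∈ Icc a b, ∀ t ∈ timeIoo T, DifferentiableAt ℝ (fun ξ => pdx u ξ t) x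
  v_diff_t : ∀ x ∈ Icc a b, ∀ t ∈ timeIoo T, DifferentiableAt ℝ (fun τ => v x τ) t
  v_diff_x : ∀ x ∈ Icc a b, ∀ t ∈ timeIoo T, DifferentiableAt ℝ (fun ξ => v ξ t) x
  v_diff_xx : ∀ x ∈ Icc a b, ∀ t ∈ timeIoo T, DifferentiableAt ℝ (fun ξ => pdx v ξ t) x
  w_diff_t : ∀ x ∈ Icc a b, ∀ t ∈ timeIoo T, DifferentiableAt ℝ (fun τ => w x τ) t
  w_diff_x : ∀ x ∈ Icc a b, ∀ t ∈ timeIoo T, DifferentiableAt ℝ (fun ξ => w ξ t) x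
  w_diff_xx : ∀ x ∈ Icc a b, ∀ t ∈ timeIoo T, DifferentiableAt ℝ (fun ξ => pdx w ξ t) x
  -- continuity of the partial derivatives on [a,b] × (0,T)
  u_t_cont : ContinuousOn (fun p : ℝ × ℝ => pdt u p.1 p.2) (Icc a b ×ˢ timeIoo T)
  u_x_cont : ContinuousOn (fun p : ℝ × ℝ => pdx u p.1 p.2) (Icc a b ×ˢ timeIoo T)
  u_xx_cont : ContinuousOn (fun p : ℝ × ℝ => pdx (pdx u) p.1 p.2) (Icc a b ×ˢ timeIoo T)
  v_t_cont : ContinuousOn (fun p : ℝ × ℝ => pdt v p.1 p.2) (Icc a b ×ˢ timeIoo T)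
  v_x_cont : ContinuousOn (fun p : ℝ × ℝ => pdx v p.1 p.2) (Icc a b ×ˢ timeIoo T)
  v_xx_cont : ContinuousOn (fun p : ℝ × ℝ => pdx (pdx v) p.1 p.2) (Icc a b ×ˢ timeIoo T)
  w_t_cont : ContinuousOn (fun p : ℝ × ℝ => pdt w p.1 p.2) (Icc a b ×ˢ timeIoo T)
  w_x_cont : ContinuousOn (fun p : ℝ × ℝ => pdx w p.1 p.2) (Icc a b ×ˢ timeIoo T)
  w_xx_cont : ContinuousOn (fun p : ℝ × ℝ => pdx (pdx w) p.1 p.2) (Icc a b ×ˢ timeIoo T)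
  -- the equations
  eq_u : ∀ x ∈ Icc a b, ∀ t ∈ timeIoo T,
    pdt u x t = pdx (pdx u) x t - pdx (fun ξ τ => u ξ τ * pdx v ξ τ) x t
      - u x t - f (u x t) * w x t + κ
  eq_v : ∀ x ∈ Icc a b, ∀ t ∈ timeIoo T,
    pdt v x t = pdx (pdx v) x t - v x t + f (u x t) * w x t
  eq_w : ∀ x ∈ Icc a b, ∀ t ∈ timeIoo T,
    pdt w x t = pdx (pdx w) x t - w x t + v x t
  -- Neumann boundary conditions
  bc_u : ∀ t ∈ timeIoo T, pdx u a t = 0 ∧ pdx u b t = 0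
  bc_v : ∀ t ∈ timeIoo T, pdx v a t = 0 ∧ pdx v b t = 0
  bc_w : ∀ t ∈ timeIoo T, pdx w a t = 0 ∧ pdx w b t = 0

section MBaux

variable {a b t : ℝ}

lemma MB.sliceCont {S : Set ℝ} {g : ℝ → ℝ → ℝ}
    (h : ContinuousOn (fun p : ℝ × ℝ => g p.1 p.2) (Icc a b ×ˢ S)) {s : ℝ} (hs : s ∈ S) :
    ContinuousOn (fun x => g x s) (Icc a b) := by
  have hco : ContinuousOn ((fun p : ℝ × ℝ => g p.1 p.2) ∘ (fun ξ : ℝ => ((ξ, s) : ℝ × ℝ)))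
      (Icc a b) :=
    ContinuousOn.comp h ((continuous_id.prodMk continuous_const).continuousOn)
      (fun ξ hξ => ⟨hξ, hs⟩)
  exact hco

lemma MB.tsliceCont {S : Set ℝ} {g : ℝ → ℝ → ℝ}
    (h : ContinuousOn (fun p : ℝ × ℝ => g p.1 p.2) (Icc a b ×ˢ S)) {x : ℝ} (hx : x ∈ Icc a b) :
    ContinuousOn (fun τ => g x τ) S := by
  have hco : ContinuousOn ((fun p : ℝ × ℝ => g p.1 p.2) ∘ (fun τ : ℝ => ((x, τ) : ℝ × ℝ))) S :=
    ContinuousOn.comp h ((continuous_const.prodMk continuous_id).continuousOn)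
      (fun τ hτ => ⟨hx, hτ⟩)
  exact hco

lemma MB.hII (hab : a ≤ b) {h : ℝ → ℝ} (hh : ContinuousOn h (Icc a b)) :
    IntervalIntegrable h MeasureTheory.volume a b :=
  (hh.mono (Set.uIcc_of_le hab).subset).intervalIntegrable

lemma MB.ftc (hab : a ≤ b) {F : ℝ → ℝ}
    (hd : ∀ x ∈ Icc a b, DifferentiableAt ℝ F x)
    (hc : ContinuousOn (fun x => deriv F x) (Icc a b)) :
    ∫ x in a..b, deriv F x = F b - F a := by
  apply intervalIntegral.integral_eq_sub_of_hasDerivAt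
  · intro x hx
    exact (hd x (by rwa [uIcc_of_le hab] at hx)).hasDerivAt
  · exact MB.hII hab hc

lemma MB.hasDerivAt_param (hab : a ≤ b) {g : ℝ → ℝ → ℝ}
    (hgt_cont : ContinuousOn (fun p : ℝ × ℝ => pdt g p.1 p.2) (Icc a b ×ˢ Ioc 0 t))
    (hg_cont : ∀ s ∈ Ioc (0:ℝ) t, ContinuousOn (fun x => g x s) (Icc a b))
    (hg_diff : ∀ x ∈ Icc a b, ∀ s ∈ Ioc (0:ℝ) t, DifferentiableAt ℝ (fun τ => g x τ) s)
    {s : ℝ} (hs : s ∈ Ioo (0:ℝ) t) :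
    HasDerivAt (fun τ => ∫ x in a..b, g x τ) (∫ x in a..b, pdt g x s) s := by
  obtain ⟨hs0, hst⟩ := hs
  set ε := min s (t - s) / 2 with hε
  have hεs : ε ≤ s / 2 := by have := min_le_left s (t - s); rw [hε]; linarith
  have hεt : ε ≤ (t - s) / 2 := by have := min_le_right s (t - s); rw [hε]; linarith
  have hε0 : 0 < ε := by
    have := lt_min hs0 (sub_pos.mpr hst); rw [hε]; linarith
  have hIccsub : Icc (s - ε) (s + ε) ⊆ Ioc 0 t := fun τ hτ =>
    ⟨by have := hτ.1; linarith, by have := hτ.2; linarith⟩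
  have hball : Metric.ball s ε ⊆ Icc (s - ε) (s + ε) := by
    rw [← Real.closedBall_eq_Icc]; exact Metric.ball_subset_closedBall
  obtain ⟨C, hC⟩ := ((isCompact_Icc.prod isCompact_Icc).exists_bound_of_continuousOn
    (hgt_cont.mono (Set.prod_mono (subset_refl _) hIccsub)))
  have key := intervalIntegral.hasDerivAt_integral_of_dominated_loc_of_deriv_le
    (𝕜 := ℝ) (μ := MeasureTheory.volume) (F := fun τ x => g x τ) (F' := fun τ x => pdt g x τ)
    (x₀ := s) (bound := fun _ => C) (Metric.ball_mem_nhds s hε0)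
    (by
      filter_upwards [Metric.ball_mem_nhds s hε0] with τ hτ
      rw [uIoc_of_le hab]
      exact ((hg_cont τ (hIccsub (hball hτ))).mono Ioc_subset_Icc_self).aestronglyMeasurable
        measurableSet_Ioc)
    (MB.hII hab (hg_cont s ⟨hs0, hst.le⟩))
    (by
      rw [uIoc_of_le hab]
      exact ((MB.sliceCont hgt_cont ⟨hs0, hst.le⟩).mono Ioc_subset_Icc_self).aestronglyMeasurable
        measurableSet_Ioc)
    (Filter.Eventually.of_forall fun x hx τ hτ =>
      hC (x, τ) ⟨Ioc_subset_Icc_self (by rwa [uIoc_of_le hab] at hx), hball hτ⟩)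
    intervalIntegrable_const
    (Filter.Eventually.of_forall fun x hx τ hτ =>
      (hg_diff x (Ioc_subset_Icc_self (by rwa [uIoc_of_le hab] at hx)) τ
        (hIccsub (hball hτ))).hasDerivAt)
  exact key.2

lemma MB.contOn_param (hab : a ≤ b) {g : ℝ → ℝ → ℝ}
    (hg : ContinuousOn (fun p : ℝ × ℝ => g p.1 p.2) (Icc a b ×ˢ Icc 0 t)) :
    ContinuousOn (fun τ => ∫ x in a..b, g x τ) (Icc 0 t) := by
  obtain ⟨C, hC⟩ := ((isCompact_Icc.prod isCompact_Icc).exists_bound_of_continuousOn hg)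
  intro s hsmem
  apply intervalIntegral.continuousWithinAt_of_dominated_interval (bound := fun _ => C)
  · filter_upwards [self_mem_nhdsWithin] with τ hτ
    rw [uIoc_of_le hab]
    exact ((MB.sliceCont hg hτ).mono Ioc_subset_Icc_self).aestronglyMeasurable measurableSet_Ioc
  · filter_upwards [self_mem_nhdsWithin] with τ hτ
    exact Filter.Eventually.of_forall fun x hx =>
      hC (x, τ) ⟨Ioc_subset_Icc_self (by rwa [uIoc_of_le hab] at hx), hτ⟩
  · exact intervalIntegrable_const
  · exact Filter.Eventually.of_forall fun x hx =>
      MB.tsliceCont hg (Ioc_subset_Icc_self (by rwa [uIoc_of_le hab] at hx)) s hsmem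

end MBaux

/-- Lemma 2.2 (L¹ bound): for any classical solution of (P) on `Ω × (0,T)` one has
`∫ u(·,t) + ∫ v(·,t) ≤ max{∫ u₀ + ∫ v₀, κ(b-a)}` for all `t ∈ (0,T)`. -/
theorem mass_bound
    (a b κ Kf α : ℝ) (f u₀ v₀ w₀ : ℝ → ℝ)
    (hab : a < b) (hκ : 0 ≤ κ) (hKf : 0 < Kf)
    (hf_smooth : ContDiffOn ℝ 1 f (Ici 0))
    (hf_nonneg : ∀ s ∈ Ici (0 : ℝ), 0 ≤ f s)
    (hf_zero : f 0 = 0)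
    (hf_growth : ∀ s : ℝ, 1 ≤ s → f s ≤ Kf * s ^ α)
    (hu₀_cont : ContinuousOn u₀ (Icc a b)) (hu₀_nonneg : ∀ x ∈ Icc a b, 0 ≤ u₀ x)
    (hv₀_lip : ∃ L : NNReal, LipschitzOnWith L v₀ (Icc a b))
    (hv₀_nonneg : ∀ x ∈ Icc a b, 0 ≤ v₀ x)
    (hw₀_cont : ContinuousOn w₀ (Icc a b)) (hw₀_nonneg : ∀ x ∈ Icc a b, 0 ≤ w₀ x)
    (T : ℝ≥0∞) (hT : 0 < T) (u v w : ℝ → ℝ → ℝ)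
    (hsol : IsClassicalSolutionP a b κ f u₀ v₀ w₀ T u v w) :
    ∀ t ∈ timeIoo T,
      (∫ x in a..b, u x t) + (∫ x in a..b, v x t)
        ≤ max ((∫ x in a..b, u₀ x) + (∫ x in a..b, v₀ x)) (κ * (b - a)) := by
  intro t ht
  obtain ⟨ht0, htT⟩ := ht
  have hab' : a ≤ b := hab.le
  have hIccT : Icc (0:ℝ) t ⊆ timeIco T := fun τ hτ =>
    ⟨hτ.1, lt_of_le_of_lt (ENNReal.ofReal_le_ofReal hτ.2) htT⟩
  have hIocT : Ioc (0:ℝ) t ⊆ timeIoo T := fun τ hτ =>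
    ⟨hτ.1, lt_of_le_of_lt (ENNReal.ofReal_le_ofReal hτ.2) htT⟩
  have hIooIco : timeIoo T ⊆ timeIco T := fun τ hτ => ⟨hτ.1.le, hτ.2⟩
  set c : ℝ := κ * (b - a) with hc
  set Y : ℝ → ℝ := fun τ => (∫ x in a..b, u x τ) + (∫ x in a..b, v x τ) with hY
  -- value of each time-derivative integral
  have hU : ∀ s ∈ Ioc (0:ℝ) t,
      (∫ x in a..b, pdt u x s)
        = -(∫ x in a..b, u x s) - (∫ x in a..b, f (u x s) * w x s) + c := by
    intro s hs
    have hsT : s ∈ timeIoo T := hIocT hs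
    have hsT' : s ∈ timeIco T := hIooIco hsT
    have cu := MB.sliceCont hsol.u_cont hsT'
    have cw := MB.sliceCont hsol.w_cont hsT'
    have cux := MB.sliceCont hsol.u_x_cont hsT
    have cuxx := MB.sliceCont hsol.u_xx_cont hsT
    have cvx := MB.sliceCont hsol.v_x_cont hsT
    have cvxx := MB.sliceCont hsol.v_xx_cont hsT
    have cfw : ContinuousOn (fun x => f (u x s) * w x s) (Icc a b) :=
      (hf_smooth.continuousOn.comp cu fun x hx => hsol.u_nonneg x hx s hsT').mul cw
    have hBeq : EqOn (fun x => pdx (fun ξ τ => u ξ τ * pdx v ξ τ) x s)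
        (fun x => pdx u x s * pdx v x s + u x s * pdx (pdx v) x s) (Icc a b) := by
      intro x hx
      exact ((hsol.u_diff_x x hx s hsT).hasDerivAt.mul
        (hsol.v_diff_xx x hx s hsT).hasDerivAt).deriv
    have cB : ContinuousOn (fun x => pdx (fun ξ τ => u ξ τ * pdx v ξ τ) x s) (Icc a b) :=
      ContinuousOn.congr ((cux.mul cvx).add (cu.mul cvxx)) hBeq
    have hIA : (∫ x in a..b, pdx (pdx u) x s) = 0 := by
      have h : (∫ x in a..b, pdx (pdx u) x s) = pdx u b s - pdx u a s :=
        MB.ftc hab' (F := fun ξ => pdx u ξ s) (fun x hx => hsol.u_diff_xx x hx s hsT) cuxx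
      rw [h, (hsol.bc_u s hsT).1, (hsol.bc_u s hsT).2, sub_zero]
    have hIB : (∫ x in a..b, pdx (fun ξ τ => u ξ τ * pdx v ξ τ) x s) = 0 := by
      have h : (∫ x in a..b, pdx (fun ξ τ => u ξ τ * pdx v ξ τ) x s)
          = u b s * pdx v b s - u a s * pdx v a s :=
        MB.ftc hab' (F := fun ξ => u ξ s * pdx v ξ s)
          (fun x hx => (hsol.u_diff_x x hx s hsT).mul (hsol.v_diff_xx x hx s hsT)) cB
      rw [h, (hsol.bc_v s hsT).1, (hsol.bc_v s hsT).2]; ring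
    rw [intervalIntegral.integral_congr (g := fun x =>
        pdx (pdx u) x s - pdx (fun ξ τ => u ξ τ * pdx v ξ τ) x s - u x s - f (u x s) * w x s + κ)
        (fun x hx => hsol.eq_u x (by rwa [uIcc_of_le hab'] at hx) s hsT)]
    rw [intervalIntegral.integral_add
        ((((MB.hII hab' cuxx).sub (MB.hII hab' cB)).sub (MB.hII hab' cu)).sub (MB.hII hab' cfw))
        intervalIntegrable_const,
      intervalIntegral.integral_sub
        (((MB.hII hab' cuxx).sub (MB.hII hab' cB)).sub (MB.hII hab' cu)) (MB.hII hab' cfw),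
      intervalIntegral.integral_sub ((MB.hII hab' cuxx).sub (MB.hII hab' cB)) (MB.hII hab' cu),
      intervalIntegral.integral_sub (MB.hII hab' cuxx) (MB.hII hab' cB),
      hIA, hIB, intervalIntegral.integral_const, smul_eq_mul, hc]
    ring
  have hV : ∀ s ∈ Ioc (0:ℝ) t,
      (∫ x in a..b, pdt v x s)
        = -(∫ x in a..b, v x s) + (∫ x in a..b, f (u x s) * w x s) := by
    intro s hs
    have hsT : s ∈ timeIoo T := hIocT hs
    have hsT' : s ∈ timeIco T := hIooIco hsT
    have cu := MB.sliceCont hsol.u_cont hsT'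
    have cv := MB.sliceCont hsol.v_cont hsT'
    have cw := MB.sliceCont hsol.w_cont hsT'
    have cvxx := MB.sliceCont hsol.v_xx_cont hsT
    have cfw : ContinuousOn (fun x => f (u x s) * w x s) (Icc a b) :=
      (hf_smooth.continuousOn.comp cu fun x hx => hsol.u_nonneg x hx s hsT').mul cw
    have hIA : (∫ x in a..b, pdx (pdx v) x s) = 0 := by
      have h : (∫ x in a..b, pdx (pdx v) x s) = pdx v b s - pdx v a s :=
        MB.ftc hab' (F := fun ξ => pdx v ξ s) (fun x hx => hsol.v_diff_xx x hx s hsT) cvxx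
      rw [h, (hsol.bc_v s hsT).1, (hsol.bc_v s hsT).2, sub_zero]
    rw [intervalIntegral.integral_congr (g := fun x =>
        pdx (pdx v) x s - v x s + f (u x s) * w x s)
        (fun x hx => hsol.eq_v x (by rwa [uIcc_of_le hab'] at hx) s hsT)]
    rw [intervalIntegral.integral_add ((MB.hII hab' cvxx).sub (MB.hII hab' cv)) (MB.hII hab' cfw),
      intervalIntegral.integral_sub (MB.hII hab' cvxx) (MB.hII hab' cv), hIA]
    ring
  -- derivative of Y
  have hY' : ∀ s ∈ Ioo (0:ℝ) t, HasDerivAt Y (-(Y s) + c) s := by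
    intro s hs
    have hs' : s ∈ Ioc (0:ℝ) t := Ioo_subset_Ioc_self hs
    have h1 : HasDerivAt (fun τ => ∫ x in a..b, u x τ) (∫ x in a..b, pdt u x s) s :=
      MB.hasDerivAt_param hab'
        (hsol.u_t_cont.mono (Set.prod_mono (subset_refl _) hIocT))
        (fun σ hσ => MB.sliceCont hsol.u_cont (hIooIco (hIocT hσ)))
        (fun x hx σ hσ => hsol.u_diff_t x hx σ (hIocT hσ)) hs
    have h2 : HasDerivAt (fun τ => ∫ x in a..b, v x τ) (∫ x in a..b, pdt v x s) s :=
      MB.hasDerivAt_param hab'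
        (hsol.v_t_cont.mono (Set.prod_mono (subset_refl _) hIocT))
        (fun σ hσ => MB.sliceCont hsol.v_cont (hIooIco (hIocT hσ)))
        (fun x hx σ hσ => hsol.v_diff_t x hx σ (hIocT hσ)) hs
    have h3 := h1.add h2
    rw [hU s hs', hV s hs'] at h3
    have : -(∫ x in a..b, u x s) - (∫ x in a..b, f (u x s) * w x s) + c +
        (-(∫ x in a..b, v x s) + (∫ x in a..b, f (u x s) * w x s)) = -(Y s) + c := by
      simp only [hY]; ring
    rwa [this] at h3
  -- continuity of Y on [0, t]
  have hYc : ContinuousOn Y (Icc 0 t) :=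
    (MB.contOn_param hab' (hsol.u_cont.mono (Set.prod_mono (subset_refl _) hIccT))).add
      (MB.contOn_param hab' (hsol.v_cont.mono (Set.prod_mono (subset_refl _) hIccT)))
  -- initial value
  have hY0 : Y 0 = (∫ x in a..b, u₀ x) + (∫ x in a..b, v₀ x) := by
    show (∫ x in a..b, u x 0) + (∫ x in a..b, v x 0) = _
    congr 1
    · exact intervalIntegral.integral_congr fun x hx =>
        hsol.u_init x (by rwa [uIcc_of_le hab'] at hx)
    · exact intervalIntegral.integral_congr fun x hx =>
        hsol.v_init x (by rwa [uIcc_of_le hab'] at hx)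
  set m : ℝ := max ((∫ x in a..b, u₀ x) + (∫ x in a..b, v₀ x)) c with hm
  have hder : ∀ τ ∈ Ioo (0:ℝ) t,
      HasDerivAt (fun σ => (Y σ - m) * Real.exp σ) ((c - m) * Real.exp τ) τ := by
    intro τ hτ
    have h := ((hY' τ hτ).sub_const m).mul (Real.hasDerivAt_exp τ)
    have he : (-(Y τ) + c) * Real.exp τ + (Y τ - m) * Real.exp τ = (c - m) * Real.exp τ := by ring
    rwa [he] at h
  have hanti : AntitoneOn (fun σ => (Y σ - m) * Real.exp σ) (Icc 0 t) := by
    apply antitoneOn_of_deriv_nonpos (convex_Icc 0 t)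
      ((hYc.sub continuousOn_const).mul Real.continuous_exp.continuousOn)
    · intro τ hτ
      rw [interior_Icc] at hτ
      exact (hder τ hτ).differentiableAt.differentiableWithinAt
    · intro τ hτ
      rw [interior_Icc] at hτ
      refine ((hder τ hτ).deriv).trans_le ?_
      exact mul_nonpos_of_nonpos_of_nonneg (by simp [sub_nonpos, hm]) (Real.exp_nonneg τ)
  have h1 : (Y t - m) * Real.exp t ≤ (Y 0 - m) * Real.exp 0 :=
    hanti (left_mem_Icc.mpr ht0.le) (right_mem_Icc.mpr ht0.le) ht0.le
  have h2 : Y 0 - m ≤ 0 := by rw [hY0, hm]; simp [sub_nonpos]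
  have h3 : (Y t - m) * Real.exp t ≤ 0 := by
    refine h1.trans ?_
    rw [Real.exp_zero, mul_one]
    exact h2
  have h4 : Y t ≤ m := by nlinarith [Real.exp_pos t]
  exact h4
end
end

section
/- Let (u,v,w) be a classical solution of (P) on Ω × (0,T) for some T ∈ (0,∞], and let q > 1. Then, with b := (1 − 1/q)/(2 − 1/q) ∈ (0,1), there exists C > 0 such that ‖w(·,t)‖_{L^∞} ≤ C ( 1 + sup_{s ∈ (0,t)} ‖v_x(·,s)‖_{L^q}^b ) for all t ∈ (0,T). -/
open Set MeasureTheory Filter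
open scoped ENNReal

noncomputable section

/-- one-sided linear ODE comparison -/
lemma ode_upper {y r : ℝ → ℝ} {μ ρ t₀ t₂ : ℝ} (hμ : 0 < μ) (hρ : 0 ≤ ρ) (ht : t₀ ≤ t₂)
    (hy_cont : ContinuousOn y (Icc t₀ t₂))
    (hy : ∀ s ∈ Ioo t₀ t₂, HasDerivAt y (-μ * y s + r s) s)
    (hr : ∀ s ∈ Ioo t₀ t₂, r s ≤ ρ) :
    y t₂ ≤ Real.exp (-μ * (t₂ - t₀)) * y t₀ + ρ / μ := by
  rcases eq_or_lt_of_le ht with rfl | ht'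
  · simp only [sub_self, mul_zero, Real.exp_zero, one_mul]
    have : 0 ≤ ρ / μ := div_nonneg hρ hμ.le
    linarith
  · set g : ℝ → ℝ := fun s => Real.exp (μ * s) * y s - ρ / μ * Real.exp (μ * s) with hg
    have hexp : ∀ s : ℝ, HasDerivAt (fun s => Real.exp (μ * s)) (μ * Real.exp (μ * s)) s := by
      intro s
      have := ((hasDerivAt_id s).const_mul μ).exp
      simpa [mul_comm] using this
    have hgd : ∀ s ∈ Ioo t₀ t₂, HasDerivAt g (Real.exp (μ * s) * (r s - ρ)) s := by
      intro s hs
      have h1 := ((hexp s).mul (hy s hs)).sub ((hexp s).const_mul (ρ / μ))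
      have : μ * Real.exp (μ * s) * y s + Real.exp (μ * s) * (-μ * y s + r s) -
          ρ / μ * (μ * Real.exp (μ * s)) = Real.exp (μ * s) * (r s - ρ) := by
        field_simp
        ring
      rwa [this] at h1
    have hganti : AntitoneOn g (Icc t₀ t₂) := by
      apply antitoneOn_of_deriv_nonpos (convex_Icc _ _)
      · have hce : ContinuousOn (fun s => Real.exp (μ * s)) (Icc t₀ t₂) :=
          (Real.continuous_exp.comp (continuous_const.mul continuous_id)).continuousOn
        exact (hce.mul hy_cont).sub (continuousOn_const.mul hce)
      · intro s hs
        rw [interior_Icc] at hs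
        exact (hgd s hs).differentiableAt.differentiableWithinAt
      · intro s hs
        rw [interior_Icc] at hs
        rw [(hgd s hs).deriv]
        have := hr s hs
        have := Real.exp_pos (μ * s)
        nlinarith
    have hkey : g t₂ ≤ g t₀ := hganti (left_mem_Icc.2 ht) (right_mem_Icc.2 ht) ht
    have E₂pos : (0:ℝ) < Real.exp (μ * t₂) := Real.exp_pos _
    have E₀pos : (0:ℝ) < Real.exp (μ * t₀) := Real.exp_pos _
    have hdm : 0 ≤ ρ / μ := div_nonneg hρ hμ.le
    have key2 : Real.exp (μ * t₂) * y t₂ ≤ Real.exp (μ * t₀) * y t₀ + ρ / μ * Real.exp (μ * t₂) := by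
      simp only [hg] at hkey
      nlinarith
    have hES : Real.exp (-μ * (t₂ - t₀)) = Real.exp (μ * t₀) / Real.exp (μ * t₂) := by
      rw [← Real.exp_sub]; ring_nf
    rw [hES]
    rw [div_mul_eq_mul_div, ← sub_nonneg]
    have expand : Real.exp (μ * t₀) * y t₀ / Real.exp (μ * t₂) + ρ / μ - y t₂ =
        (Real.exp (μ * t₀) * y t₀ + ρ / μ * Real.exp (μ * t₂) - Real.exp (μ * t₂) * y t₂) /
          Real.exp (μ * t₂) := by
      field_simp
    rw [expand]
    apply div_nonneg _ E₂pos.le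
    linarith

lemma ode_abs_bound {y r : ℝ → ℝ} {μ ρ t₀ t₂ : ℝ} (hμ : 0 < μ) (hρ : 0 ≤ ρ) (ht : t₀ ≤ t₂)
    (hy_cont : ContinuousOn y (Icc t₀ t₂))
    (hy : ∀ s ∈ Ioo t₀ t₂, HasDerivAt y (-μ * y s + r s) s)
    (hr : ∀ s ∈ Ioo t₀ t₂, |r s| ≤ ρ) :
    |y t₂| ≤ Real.exp (-μ * (t₂ - t₀)) * |y t₀| + ρ / μ := by
  have hE : (0:ℝ) ≤ Real.exp (-μ * (t₂ - t₀)) := (Real.exp_pos _).le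
  have h1 : y t₂ ≤ Real.exp (-μ * (t₂ - t₀)) * |y t₀| + ρ / μ := by
    have := ode_upper hμ hρ ht hy_cont hy (fun s hs => (abs_le.1 (hr s hs)).2)
    have h0 : y t₀ ≤ |y t₀| := le_abs_self _
    nlinarith
  have h2 : -(y t₂) ≤ Real.exp (-μ * (t₂ - t₀)) * |y t₀| + ρ / μ := by
    have hyneg : ∀ s ∈ Ioo t₀ t₂, HasDerivAt (fun s => -(y s)) (-μ * (-(y s)) + (-(r s))) s := by
      intro s hs
      have := (hy s hs).neg
      have e : -(-μ * y s + r s) = -μ * -y s + -r s := by ring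
      rwa [e] at this
    have := ode_upper hμ hρ ht hy_cont.neg hyneg
      (fun s hs => by have := (abs_le.1 (hr s hs)).1; linarith)
    have h0 : -(y t₀) ≤ |y t₀| := neg_le_abs _
    simp only [Pi.neg_apply] at this
    nlinarith
  rw [abs_le]; constructor <;> linarith

lemma sliceContOn {h : ℝ → ℝ → ℝ} {A S : Set ℝ}
    (hc : ContinuousOn (fun p : ℝ × ℝ => h p.1 p.2) (A ×ˢ S)) {s : ℝ} (hs : s ∈ S) :
    ContinuousOn (fun x => h x s) A :=
  hc.comp ((continuous_id.prodMk continuous_const).continuousOn) (fun _ hx => ⟨hx, hs⟩)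

lemma integral_deriv_eq_sub' {a b : ℝ} (hab : a ≤ b) {g g' : ℝ → ℝ}
    (hd : ∀ x ∈ Icc a b, HasDerivAt g (g' x) x) (hc : ContinuousOn g' (Icc a b)) :
    ∫ x in a..b, g' x = g b - g a := by
  apply intervalIntegral.integral_eq_sub_of_hasDerivAt
  · rwa [uIcc_of_le hab]
  · apply ContinuousOn.intervalIntegrable
    rwa [uIcc_of_le hab]

lemma continuousOn_param_integral {a b c d : ℝ} (hab : a ≤ b) {h : ℝ → ℝ → ℝ} {φ : ℝ → ℝ}
    (hφ : Continuous φ)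
    (hc : ContinuousOn (fun p : ℝ × ℝ => h p.1 p.2) (Icc a b ×ˢ Icc c d)) :
    ContinuousOn (fun s => ∫ x in a..b, h x s * φ x) (Icc c d) := by
  have hK : IsCompact (Icc a b ×ˢ Icc c d) := (isCompact_Icc).prod isCompact_Icc
  have hU : UniformContinuousOn (fun p : ℝ × ℝ => h p.1 p.2) (Icc a b ×ˢ Icc c d) :=
    hK.uniformContinuousOn_of_continuous hc
  obtain ⟨Cφ, hCφ⟩ := (isCompact_Icc (a := a) (b := b)).exists_bound_of_continuousOn
    hφ.continuousOn
  have hCφ0 : 0 ≤ Cφ := le_trans (norm_nonneg (φ a)) (hCφ a (left_mem_Icc.2 hab))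
  rw [Metric.continuousOn_iff]
  intro s hs ε hε
  have hden : (0:ℝ) < (b - a) * Cφ + 1 := by nlinarith
  have hε' : 0 < ε / ((b - a) * Cφ + 1) := div_pos hε hden
  obtain ⟨δ, hδ, hδ'⟩ := Metric.uniformContinuousOn_iff.1 hU _ hε'
  refine ⟨δ, hδ, fun s' hs' hd => ?_⟩
  have hint : ∀ σ, σ ∈ Icc c d → IntervalIntegrable (fun x => h x σ * φ x) volume a b := by
    intro σ hσ
    apply ContinuousOn.intervalIntegrable
    rw [uIcc_of_le hab]
    exact (sliceContOn hc hσ).mul hφ.continuousOn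
  have hsub : dist (∫ x in a..b, h x s' * φ x) (∫ x in a..b, h x s * φ x) =
      ‖∫ x in a..b, (h x s' * φ x - h x s * φ x)‖ := by
    rw [dist_eq_norm, ← intervalIntegral.integral_sub (hint s' hs') (hint s hs)]
  rw [hsub]
  have hb : ∀ x ∈ Set.uIoc a b, ‖h x s' * φ x - h x s * φ x‖ ≤ ε / ((b - a) * Cφ + 1) * Cφ := by
    intro x hx
    have hxI : x ∈ Icc a b := by
      rw [uIoc_of_le hab] at hx; exact Ioc_subset_Icc_self hx
    have h1 : dist (h x s') (h x s) < ε / ((b - a) * Cφ + 1) := by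
      exact hδ' (x, s') ⟨hxI, hs'⟩ (x, s) ⟨hxI, hs⟩ (by
        rw [Prod.dist_eq]; simp only [dist_self]
        exact max_lt hδ hd)
    have h2 : ‖h x s' * φ x - h x s * φ x‖ = |h x s' - h x s| * |φ x| := by
      rw [← sub_mul]; exact abs_mul _ _
    rw [h2]
    rw [Real.dist_eq] at h1
    exact mul_le_mul h1.le (hCφ x hxI) (abs_nonneg _) hε'.le
  calc ‖∫ x in a..b, (h x s' * φ x - h x s * φ x)‖
      ≤ ε / ((b - a) * Cφ + 1) * Cφ * |b - a| :=
        intervalIntegral.norm_integral_le_of_norm_le_const hb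
    _ < ε := by
        rw [abs_of_nonneg (by linarith : (0:ℝ) ≤ b - a)]
        rw [div_mul_eq_mul_div, div_mul_eq_mul_div, div_lt_iff₀ hden]
        nlinarith

lemma hasDerivAt_param_integral {a b : ℝ} (hab : a ≤ b) {h h' : ℝ → ℝ → ℝ} {φ : ℝ → ℝ}
    (hφ : Continuous φ) {t ε : ℝ} (hε : 0 < ε)
    (hcont : ContinuousOn (fun p : ℝ × ℝ => h p.1 p.2) (Icc a b ×ˢ Icc (t - ε) (t + ε)))
    (hcont' : ContinuousOn (fun p : ℝ × ℝ => h' p.1 p.2) (Icc a b ×ˢ Icc (t - ε) (t + ε)))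
    (hdiff : ∀ x ∈ Icc a b, ∀ s ∈ Icc (t - ε) (t + ε), HasDerivAt (fun τ => h x τ) (h' x s) s) :
    HasDerivAt (fun s => ∫ x in a..b, h x s * φ x) (∫ x in a..b, h' x t * φ x) t := by
  have htmem : t ∈ Icc (t - ε) (t + ε) := by constructor <;> linarith
  have hIsub : Set.uIoc a b ⊆ Icc a b := by
    rw [uIoc_of_le hab]; exact Ioc_subset_Icc_self
  have hrle : volume.restrict (Set.uIoc a b) ≤ volume.restrict (Icc a b) :=
    Measure.restrict_mono hIsub le_rfl
  have hball : Metric.ball t ε ⊆ Icc (t - ε) (t + ε) := by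
    intro s hs
    rw [Metric.mem_ball, Real.dist_eq, abs_lt] at hs
    constructor <;> linarith
  have hslice : ∀ s ∈ Icc (t - ε) (t + ε),
      ContinuousOn (fun x => h x s * φ x) (Icc a b) := fun s hs =>
    (sliceContOn hcont hs).mul hφ.continuousOn
  have hslice' : ∀ s ∈ Icc (t - ε) (t + ε),
      ContinuousOn (fun x => h' x s * φ x) (Icc a b) := fun s hs =>
    (sliceContOn hcont' hs).mul hφ.continuousOn
  obtain ⟨C', hC'⟩ := ((isCompact_Icc.prod isCompact_Icc).exists_bound_of_continuousOn hcont')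
  obtain ⟨Cφ, hCφ⟩ := (isCompact_Icc (a := a) (b := b)).exists_bound_of_continuousOn
    hφ.continuousOn
  refine (intervalIntegral.hasDerivAt_integral_of_dominated_loc_of_deriv_le
    (F := fun s x => h x s * φ x) (F' := fun s x => h' x s * φ x) (x₀ := t)
    (bound := fun _ => C' * Cφ) (μ := volume) (a := a) (b := b) (Metric.ball_mem_nhds t hε)
    ?_ ?_ ?_ ?_ ?_ ?_).2
  · filter_upwards [Metric.ball_mem_nhds t hε] with s hs
    exact (((hslice s (hball hs)).aestronglyMeasurable (μ := volume)
      measurableSet_Icc).mono_measure hrle)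
  · apply ContinuousOn.intervalIntegrable
    rw [uIcc_of_le hab]
    exact hslice t htmem
  · exact (((hslice' t htmem).aestronglyMeasurable (μ := volume)
      measurableSet_Icc).mono_measure hrle)
  · apply ae_of_all
    intro x hx s hs
    have hxI : x ∈ Icc a b := hIsub hx
    have h1 : ‖h' x s‖ ≤ C' := hC' (x, s) ⟨hxI, hball hs⟩
    have h2 : ‖φ x‖ ≤ Cφ := hCφ x hxI
    calc ‖h' x s * φ x‖ = ‖h' x s‖ * ‖φ x‖ := norm_mul _ _
      _ ≤ C' * Cφ := mul_le_mul h1 h2 (norm_nonneg _) (le_trans (norm_nonneg _) h1)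
  · exact intervalIntegrable_const
  · apply ae_of_all
    intro x hx s hs
    exact (hdiff x (hIsub hx) s (hball hs)).mul_const (φ x)

lemma timeIoo_subset_timeIco {T : ℝ≥0∞} : timeIoo T ⊆ timeIco T := fun _ h => ⟨h.1.le, h.2⟩

lemma mem_timeIoo_of_le {T : ℝ≥0∞} {t s : ℝ} (ht : t ∈ timeIoo T) (hs : 0 < s) (hst : s ≤ t) :
    s ∈ timeIoo T :=
  ⟨hs, lt_of_le_of_lt (ENNReal.ofReal_le_ofReal hst) ht.2⟩

lemma mem_timeIco_of_le {T : ℝ≥0∞} {t s : ℝ} (ht : t ∈ timeIoo T) (hs : 0 ≤ s) (hst : s ≤ t) :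
    s ∈ timeIco T :=
  ⟨hs, lt_of_le_of_lt (ENNReal.ofReal_le_ofReal hst) ht.2⟩

lemma timeIoo_eps {T : ℝ≥0∞} {t : ℝ} (ht : t ∈ timeIoo T) :
    ∃ ε > 0, Icc (t - ε) (t + ε) ⊆ timeIoo T := by
  by_cases hT : T = ⊤
  · refine ⟨t / 2, by linarith [ht.1], fun s hs => ?_⟩
    subst hT
    exact ⟨by simp only [mem_Icc] at hs; linarith [ht.1], by simp⟩
  · have htT : t < T.toReal := (ENNReal.ofReal_lt_iff_lt_toReal ht.1.le hT).mp ht.2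
    have h1 : 0 < t / 2 := by linarith [ht.1]
    have h2 : 0 < (T.toReal - t) / 2 := by linarith
    refine ⟨min (t / 2) ((T.toReal - t) / 2), lt_min h1 h2, fun s hs => ?_⟩
    simp only [mem_Icc] at hs
    have hmin1 : min (t / 2) ((T.toReal - t) / 2) ≤ t / 2 := min_le_left _ _
    have hmin2 : min (t / 2) ((T.toReal - t) / 2) ≤ (T.toReal - t) / 2 := min_le_right _ _
    have hs0 : 0 < s := by linarith [ht.1]
    refine ⟨hs0, (ENNReal.ofReal_lt_iff_lt_toReal hs0.le hT).mpr (by linarith)⟩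

lemma solution_mode_hasDerivAt {a b : ℝ} (hab : a ≤ b) {T : ℝ≥0∞} {h : ℝ → ℝ → ℝ} {φ : ℝ → ℝ}
    (hφ : Continuous φ)
    (hc : ContinuousOn (fun p : ℝ × ℝ => h p.1 p.2) (Icc a b ×ˢ timeIco T))
    (hc' : ContinuousOn (fun p : ℝ × ℝ => pdt h p.1 p.2) (Icc a b ×ˢ timeIoo T))
    (hd : ∀ x ∈ Icc a b, ∀ s ∈ timeIoo T, DifferentiableAt ℝ (fun τ => h x τ) s)
    {t : ℝ} (ht : t ∈ timeIoo T) :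
    HasDerivAt (fun s => ∫ x in a..b, h x s * φ x) (∫ x in a..b, pdt h x t * φ x) t := by
  obtain ⟨ε, hε, hsub⟩ := timeIoo_eps ht
  apply hasDerivAt_param_integral hab hφ hε
  · exact hc.mono (prod_mono_right (hsub.trans timeIoo_subset_timeIco))
  · exact hc'.mono (prod_mono_right hsub)
  · intro x hx s hs
    exact (hd x hx s (hsub hs)).hasDerivAt

lemma summable_exp_neg_nat_sq {c : ℝ} (hc : 0 < c) :
    Summable (fun n : ℕ => Real.exp (-(c * (n : ℝ) ^ 2))) := by
  refine Summable.of_nonneg_of_le (fun n => (Real.exp_pos _).le)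
    (f := fun n : ℕ => Real.exp (-c) ^ n) (fun n => ?_) ?_
  · show Real.exp (-(c * (n : ℝ) ^ 2)) ≤ Real.exp (-c) ^ n
    rw [← Real.exp_nat_mul]
    apply Real.exp_le_exp.2
    have h1 : (n : ℝ) ≤ (n : ℝ) ^ 2 := by
      have := Nat.le_self_pow (two_ne_zero) n
      exact_mod_cast this
    nlinarith
  · exact summable_geometric_of_lt_one (Real.exp_pos _).le
      (Real.exp_lt_one_iff.2 (by linarith))

lemma summable_exp_neg_int_sq {c : ℝ} (hc : 0 < c) :
    Summable (fun n : ℤ => Real.exp (-(c * (n : ℝ) ^ 2))) := by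
  apply Summable.of_nat_of_neg
  · apply Summable.congr (summable_exp_neg_nat_sq hc)
    intro n
    norm_num
  · apply Summable.congr (summable_exp_neg_nat_sq hc)
    intro n
    push_cast
    ring_nf

lemma summable_inv_one_add_nat_sq {c : ℝ} (hc : 0 < c) :
    Summable (fun n : ℕ => 1 / (1 + c * (n : ℝ) ^ 2)) := by
  rw [← summable_nat_add_iff 1]
  refine Summable.of_nonneg_of_le (fun n => by positivity)
    (f := fun n : ℕ => (1 / c) * (1 / ((n : ℝ) + 1) ^ 2)) (fun n => ?_) ?_
  · show 1 / (1 + c * ((n + 1 : ℕ) : ℝ) ^ 2) ≤ (1 / c) * (1 / ((n : ℝ) + 1) ^ 2)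
    have e : (1 / c) * (1 / ((n : ℝ) + 1) ^ 2) = 1 / (c * ((n : ℝ) + 1) ^ 2) := by
      field_simp
    push_cast
    rw [e]
    apply one_div_le_one_div_of_le (by positivity)
    nlinarith [sq_nonneg ((n : ℝ) + 1)]
  · apply Summable.mul_left
    have h2 : Summable (fun n : ℕ => 1 / ((n : ℝ)) ^ 2) := by
      apply Summable.congr (Real.summable_one_div_nat_rpow.2 (by norm_num : (1:ℝ) < 2))
      intro n
      rw [← Real.rpow_natCast (n : ℝ) 2]
      norm_num
    have h3 := (summable_nat_add_iff 1).2 h2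
    apply Summable.congr h3
    intro n
    push_cast
    ring_nf

lemma summable_inv_one_add_int_sq {c : ℝ} (hc : 0 < c) :
    Summable (fun n : ℤ => 1 / (1 + c * (n : ℝ) ^ 2)) := by
  apply Summable.of_nat_of_neg
  · apply Summable.congr (summable_inv_one_add_nat_sq hc)
    intro n
    norm_num
  · apply Summable.congr (summable_inv_one_add_nat_sq hc)
    intro n
    push_cast
    ring_nf

open Real in
lemma fourier_recon {a b : ℝ} (hab : a < b) {W : ℝ → ℝ} (hW : ContinuousOn W (Icc a b))
    {B : ℤ → ℝ} (hB : Summable B)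
    (hA : ∀ n : ℤ,
      |∫ y in a..b, W y * Real.cos ((n * π / (b - a)) * (y - b))| ≤ B n)
    {x : ℝ} (hx : x ∈ Icc a b) :
    |W x| ≤ (∑' n : ℤ, B n) / (b - a) := by
  set L : ℝ := b - a with hLdef
  have hL : 0 < L := by simp only [hLdef]; linarith
  set P : ℝ := 2 * L with hPdef
  have hP : 0 < P := by positivity
  haveI : Fact (0 < P) := ⟨hP⟩
  -- the folded (even-extension) function
  set F : ℝ → ℂ := fun y => ((W (b - |b - y|) : ℝ) : ℂ) with hFdef
  have hfold : ∀ y ∈ Icc a (a + P), b - |b - y| ∈ Icc a b := by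
    intro y hy
    simp only [mem_Icc] at hy ⊢
    have h2 : |b - y| ≤ L := by
      rw [abs_le]
      constructor
      · simp only [hPdef] at hy; linarith [hy.2]
      · linarith [hy.1]
    constructor
    · simp only [hLdef] at h2; linarith
    · have := abs_nonneg (b - y); linarith
  have hFa : F a = F (a + P) := by
    have e1 : b - |b - a| = a := by
      rw [abs_of_nonneg (by linarith)]; ring
    have e2 : b - |b - (a + P)| = a := by
      rw [abs_of_nonpos (by simp only [hPdef, hLdef]; linarith)]
      simp only [hPdef, hLdef]; ring
    simp only [hFdef, e1, e2]
  have hσcont : Continuous fun y : ℝ => b - |b - y| := by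
    apply continuous_const.sub
    exact (continuous_const.sub continuous_id).abs
  have hFc : ContinuousOn F (Icc a (a + P)) := by
    apply Complex.continuous_ofReal.comp_continuousOn
    exact hW.comp hσcont.continuousOn hfold
  set g : C(AddCircle P, ℂ) := ⟨AddCircle.liftIco P a F, AddCircle.liftIco_continuous hFa hFc⟩
    with hgdef
  -- value of g on [a, a+P]
  have hgval : ∀ y ∈ Ico a (a + P), g y = F y := by
    intro y hy
    show AddCircle.liftIco P a F ↑y = F y
    exact AddCircle.liftIco_coe_apply hy
  -- coefficient computation
  have hcoeff : ∀ n : ℤ, ‖fourierCoeff (⇑g) n‖ =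
      |∫ y in a..b, W y * Real.cos ((n * π / L) * (y - b))| / L := by
    intro n
    rw [fourierCoeff_eq_intervalIntegral (⇑g) n a]
    -- replace g by F in the integral
    have hgF : ∀ y ∈ Icc a (a + P), @fourier P (-n) (y : AddCircle P) • g y
        = @fourier P (-n) (y : AddCircle P) • F y := by
      intro y hy
      rcases lt_or_eq_of_le hy.2 with h | h
      · rw [hgval y ⟨hy.1, h⟩]
      · subst h
        have e : ((a + P : ℝ) : AddCircle P) = ((a : ℝ) : AddCircle P) := by
          rw [AddCircle.coe_add_period]
        rw [e, hgval a (left_mem_Ico.2 (by linarith)), ← hFa]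
    have hI : (∫ y in a..a + P, @fourier P (-n) (y : AddCircle P) • g y)
        = ∫ y in a..a + P, @fourier P (-n) (y : AddCircle P) • F y := by
      apply intervalIntegral.integral_congr
      intro y hy
      rw [uIcc_of_le (by linarith : a ≤ a + P)] at hy
      exact hgF y hy
    have hI2 : (∫ y in a..a + P, @fourier P (-n) (y : AddCircle P) • F y)
        = ∫ y in a..a + P, (fun z => @fourier P (-n) (z : AddCircle P)) y * F y := by
      simp only [smul_eq_mul]
    rw [hI, hI2]
    set E : ℝ → ℂ := fun y => @fourier P (-n) (y : AddCircle P) with hEdef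
    -- split the integral at b  (a + P = 2*b - a)
    have hb2 : a + P = 2 * b - a := by simp only [hPdef, hLdef]; ring
    have hEcont : Continuous E := by
      exact (fourier (-n)).continuous.comp (AddCircle.continuous_mk' P)
    have hWcont1 : ContinuousOn (fun y => E y * F y) (Icc a b) := by
      apply hEcont.continuousOn.mul
      exact hFc.mono (fun y hy => ⟨hy.1, by simp only [hPdef, hLdef]; nlinarith [hy.2]⟩)
    have hWcont2 : ContinuousOn (fun y => E y * F y) (Icc b (a + P)) := by
      apply hEcont.continuousOn.mul
      exact hFc.mono (fun y hy => ⟨by linarith [hy.1], hy.2⟩)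
    have hsplit : (∫ y in a..a + P, E y * F y)
        = (∫ y in a..b, E y * F y) + ∫ y in b..a + P, E y * F y := by
      symm
      apply intervalIntegral.integral_add_adjacent_intervals
      · apply ContinuousOn.intervalIntegrable
        rwa [uIcc_of_le hab.le]
      · apply ContinuousOn.intervalIntegrable
        rw [uIcc_of_le (by simp only [hPdef, hLdef]; linarith : b ≤ a + P)]
        exact hWcont2
    rw [hsplit]
    -- substitution on the second piece
    have hFsymm : ∀ y : ℝ, F (2 * b - y) = F y := by
      intro y
      simp only [hFdef]
      congr 2
      rw [show b - (2 * b - y) = -(b - y) by ring, abs_neg]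
    have hsub2 : (∫ y in b..a + P, E y * F y) = ∫ y in a..b, E (2 * b - y) * F y := by
      have e1 : (∫ y in b..a + P, E y * F y)
          = ∫ y in b..a + P, (fun z => E (2 * b - z) * F (2 * b - z)) (2 * b - y) := by
        apply intervalIntegral.integral_congr
        intro y _
        norm_num
      rw [e1, intervalIntegral.integral_comp_sub_left (fun z => E (2 * b - z) * F (2 * b - z))
        (2 * b)]
      have e2 : 2 * b - (a + P) = a := by rw [hb2]; ring
      have e3 : 2 * b - b = b := by ring
      rw [e2, e3]
      apply intervalIntegral.integral_congr
      intro y _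
      show E (2 * b - y) * F (2 * b - y) = E (2 * b - y) * F y
      rw [hFsymm y]
    rw [hsub2]
    -- merge the two integrals on [a, b]
    have hint1 : IntervalIntegrable (fun y => E y * F y) volume a b := by
      apply ContinuousOn.intervalIntegrable; rwa [uIcc_of_le hab.le]
    have hint2 : IntervalIntegrable (fun y => E (2 * b - y) * F y) volume a b := by
      apply ContinuousOn.intervalIntegrable
      rw [uIcc_of_le hab.le]
      apply ContinuousOn.mul
      · exact (hEcont.comp (continuous_const.sub continuous_id)).continuousOn
      · exact hFc.mono (fun y hy => ⟨hy.1, by simp only [hPdef, hLdef]; nlinarith [hy.2]⟩)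
    have hmerge : ((∫ y in a..b, E y * F y) + ∫ y in a..b, E (2 * b - y) * F y)
        = ∫ y in a..b, (E y + E (2 * b - y)) * F y := by
      rw [← intervalIntegral.integral_add hint1 hint2]
      apply intervalIntegral.integral_congr
      intro y _
      ring
    rw [hmerge]
    -- the trigonometric identity
    set c : ℝ := -(n * π / L) with hcdef
    have hEexp : ∀ y : ℝ, E y = Complex.exp (↑(c * y) * Complex.I) := by
      intro y
      simp only [hEdef]
      rw [fourier_coe_apply]
      congr 1
      rw [hcdef]
      have hLne : (L : ℂ) ≠ 0 := by
        simp only [ne_eq, Complex.ofReal_eq_zero]; exact ne_of_gt hL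
      simp only [hPdef]
      push_cast
      field_simp
    have hexpadd : ∀ s : ℝ, Complex.exp (↑s * Complex.I) + Complex.exp (↑(-s) * Complex.I)
        = 2 * ↑(Real.cos s) := by
      intro s
      rw [Complex.exp_mul_I, Complex.exp_mul_I]
      push_cast
      simp only [Complex.cos_neg, Complex.sin_neg]
      ring
    have htrig : ∀ y : ℝ, E y + E (2 * b - y)
        = (2 * Complex.exp (↑(c * b) * Complex.I)) * ↑(Real.cos ((n * π / L) * (y - b))) := by
      intro y
      rw [hEexp y, hEexp (2 * b - y)]
      have e1 : c * y = c * b + c * (y - b) := by ring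
      have e2 : c * (2 * b - y) = c * b + -(c * (y - b)) := by ring
      rw [e1, e2]
      push_cast
      rw [add_mul, add_mul, Complex.exp_add, Complex.exp_add, ← mul_add]
      have h5 := hexpadd (c * (y - b))
      push_cast at h5
      rw [h5]
      have h6 : ((c : ℝ) : ℂ) * ((y : ℂ) - (b : ℂ))
          = -(((n : ℂ) * (π : ℂ) / (L : ℂ)) * ((y : ℂ) - (b : ℂ))) := by
        rw [hcdef]; push_cast; ring
      rw [h6, Complex.cos_neg]
      ring
    have hfin : (∫ y in a..b, (E y + E (2 * b - y)) * F y)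
        = (2 * Complex.exp (↑(c * b) * Complex.I))
          * ↑(∫ y in a..b, W y * Real.cos ((n * π / L) * (y - b))) := by
      rw [← intervalIntegral.integral_ofReal, ← intervalIntegral.integral_const_mul]
      apply intervalIntegral.integral_congr
      intro y hy
      rw [uIcc_of_le hab.le] at hy
      show (E y + E (2 * b - y)) * F y
          = 2 * Complex.exp (↑(c * b) * Complex.I) * ↑(W y * Real.cos ((n * π / L) * (y - b)))
      rw [htrig y]
      have hFy : F y = ↑(W y) := by
        simp only [hFdef]
        congr 2
        rw [abs_of_nonneg (by linarith [hy.2])]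
        ring
      rw [hFy]
      push_cast
      ring
    rw [hfin]
    rw [norm_smul, norm_mul, norm_mul]
    have h1 : ‖Complex.exp (↑(c * b) * Complex.I)‖ = 1 := by
      exact Complex.norm_exp_ofReal_mul_I _
    have h2 : ‖(↑(∫ y in a..b, W y * Real.cos ((n * π / L) * (y - b))) : ℂ)‖
        = |∫ y in a..b, W y * Real.cos ((n * π / L) * (y - b))| := by
      rw [Complex.norm_real, Real.norm_eq_abs]
    rw [h1, h2]
    have hLne : L ≠ 0 := ne_of_gt hL
    simp only [norm_one, norm_div, Real.norm_ofNat, Real.norm_eq_abs, Complex.norm_ofNat]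
    rw [abs_of_pos hP, hPdef]
    field_simp
  -- summability of the Fourier coefficients
  have hnormle : ∀ n : ℤ, ‖fourierCoeff (⇑g) n‖ ≤ B n / L := by
    intro n
    rw [hcoeff n]
    have h := hA n
    gcongr
  have hBL : Summable (fun n : ℤ => B n / L) := hB.div_const L
  have hsummn : Summable (fun n : ℤ => ‖fourierCoeff (⇑g) n‖) :=
    Summable.of_nonneg_of_le (fun n => norm_nonneg _) hnormle hBL
  have hsumm : Summable (fourierCoeff (⇑g)) := hsummn.of_norm
  have hps := has_pointwise_sum_fourier_series_of_summable hsumm ((x : ℝ) : AddCircle P)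
  have hgx : g ((x : ℝ) : AddCircle P) = ↑(W x) := by
    have hxIco : (x : ℝ) ∈ Ico a (a + P) := by
      constructor
      · exact hx.1
      · simp only [hPdef, hLdef]; linarith [hx.2]
    rw [hgval x hxIco]
    simp only [hFdef]
    congr 2
    rw [abs_of_nonneg (by linarith [hx.2])]
    ring
  have htermnorm : ∀ i : ℤ,
      ‖fourierCoeff (⇑g) i • fourier i ((x : ℝ) : AddCircle P)‖ = ‖fourierCoeff (⇑g) i‖ := by
    intro i
    rw [norm_smul]
    have : ‖fourier i ((x : ℝ) : AddCircle P)‖ = 1 := Circle.norm_coe _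
    rw [this, mul_one]
  have hterm_summ : Summable (fun i : ℤ =>
      ‖fourierCoeff (⇑g) i • fourier i ((x : ℝ) : AddCircle P)‖) := by
    apply Summable.congr hsummn
    intro i
    exact (htermnorm i).symm
  calc |W x| = ‖(↑(W x) : ℂ)‖ := by rw [Complex.norm_real, Real.norm_eq_abs]
    _ = ‖g ((x : ℝ) : AddCircle P)‖ := by rw [hgx]
    _ = ‖∑' i : ℤ, fourierCoeff (⇑g) i • fourier i ((x : ℝ) : AddCircle P)‖ := by
        rw [hps.tsum_eq]
    _ ≤ ∑' i : ℤ, ‖fourierCoeff (⇑g) i • fourier i ((x : ℝ) : AddCircle P)‖ :=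
        norm_tsum_le_tsum_norm hterm_summ
    _ = ∑' i : ℤ, ‖fourierCoeff (⇑g) i‖ := by
        apply tsum_congr; intro i; exact htermnorm i
    _ ≤ ∑' i : ℤ, B i / L := hsummn.tsum_le_tsum hnormle hBL
    _ = (∑' i : ℤ, B i) / L := by
        rw [tsum_div_const]
    _ = (∑' i : ℤ, B i) / (b - a) := by rw [hLdef]

lemma mode_deriv_general {a b : ℝ} (hab : a < b) {T : ℝ≥0∞} {h R : ℝ → ℝ → ℝ}
    {φ φ' : ℝ → ℝ} {lam2 : ℝ}
    (hφc : Continuous φ) (hφ'c : Continuous φ')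
    (hφd : ∀ x : ℝ, HasDerivAt φ (φ' x) x)
    (hφdd : ∀ x : ℝ, HasDerivAt φ' (-lam2 * φ x) x)
    (hφa : φ' a = 0) (hφb : φ' b = 0)
    (h_cont : ContinuousOn (fun p : ℝ × ℝ => h p.1 p.2) (Icc a b ×ˢ timeIco T))
    (h_t_cont : ContinuousOn (fun p : ℝ × ℝ => pdt h p.1 p.2) (Icc a b ×ˢ timeIoo T))
    (h_xx_cont : ContinuousOn (fun p : ℝ × ℝ => pdx (pdx h) p.1 p.2) (Icc a b ×ˢ timeIoo T))
    (h_diff_t : ∀ x ∈ Icc a b, ∀ t ∈ timeIoo T, DifferentiableAt ℝ (fun τ => h x τ) t)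
    (h_diff_x : ∀ x ∈ Icc a b, ∀ t ∈ timeIoo T, DifferentiableAt ℝ (fun ξ => h ξ t) x)
    (h_diff_xx : ∀ x ∈ Icc a b, ∀ t ∈ timeIoo T, DifferentiableAt ℝ (fun ξ => pdx h ξ t) x)
    (h_bc : ∀ t ∈ timeIoo T, pdx h a t = 0 ∧ pdx h b t = 0)
    (heq : ∀ x ∈ Icc a b, ∀ s ∈ timeIoo T, pdt h x s = pdx (pdx h) x s - h x s + R x s)
    {s : ℝ} (hs : s ∈ timeIoo T)
    (hRs : ContinuousOn (fun x => R x s) (Icc a b)) :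
    HasDerivAt (fun τ => ∫ x in a..b, h x τ * φ x)
      (-(1 + lam2) * (∫ x in a..b, h x s * φ x) + ∫ x in a..b, R x s * φ x) s := by
  have hsIco : s ∈ timeIco T := timeIoo_subset_timeIco hs
  have h1 := solution_mode_hasDerivAt hab.le hφc h_cont h_t_cont h_diff_t hs
  have hhs : ContinuousOn (fun x => h x s) (Icc a b) := sliceContOn h_cont hsIco
  have hxx : ContinuousOn (fun x => pdx (pdx h) x s) (Icc a b) := sliceContOn h_xx_cont hs
  have hP : ∀ x ∈ Icc a b, HasDerivAt (fun ξ => pdx h ξ s * φ ξ - h ξ s * φ' ξ)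
      (pdx (pdx h) x s * φ x + lam2 * (h x s * φ x)) x := by
    intro x hx
    have hd1 : HasDerivAt (fun ξ => pdx h ξ s) (pdx (pdx h) x s) x :=
      (h_diff_xx x hx s hs).hasDerivAt
    have hd2 : HasDerivAt (fun ξ => h ξ s) (pdx h x s) x :=
      (h_diff_x x hx s hs).hasDerivAt
    have h3 := (hd1.mul (hφd x)).sub (hd2.mul (hφdd x))
    have e : pdx (pdx h) x s * φ x + pdx h x s * φ' x -
        (pdx h x s * φ' x + h x s * (-lam2 * φ x))
        = pdx (pdx h) x s * φ x + lam2 * (h x s * φ x) := by ring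
    rwa [e] at h3
  have hTcont : ContinuousOn (fun x => pdx (pdx h) x s * φ x + lam2 * (h x s * φ x)) (Icc a b) :=
    (hxx.mul hφc.continuousOn).add (continuousOn_const.mul (hhs.mul hφc.continuousOn))
  have hFTC : (∫ x in a..b, (pdx (pdx h) x s * φ x + lam2 * (h x s * φ x))) = 0 := by
    rw [integral_deriv_eq_sub' hab.le hP hTcont]
    rw [(h_bc s hs).1, (h_bc s hs).2, hφa, hφb]
    ring
  have hcongr : (∫ x in a..b, pdt h x s * φ x)
      = ∫ x in a..b, ((pdx (pdx h) x s * φ x + lam2 * (h x s * φ x))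
          - (1 + lam2) * (h x s * φ x) + R x s * φ x) := by
    apply intervalIntegral.integral_congr
    intro x hx
    rw [uIcc_of_le hab.le] at hx
    show pdt h x s * φ x = pdx (pdx h) x s * φ x + lam2 * (h x s * φ x)
        - (1 + lam2) * (h x s * φ x) + R x s * φ x
    rw [heq x hx s hs]
    ring
  have hi1 : IntervalIntegrable (fun x => pdx (pdx h) x s * φ x + lam2 * (h x s * φ x))
      volume a b := by
    apply ContinuousOn.intervalIntegrable; rw [uIcc_of_le hab.le]; exact hTcont
  have hi2 : IntervalIntegrable (fun x => (1 + lam2) * (h x s * φ x)) volume a b := by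
    apply ContinuousOn.intervalIntegrable; rw [uIcc_of_le hab.le]
    exact continuousOn_const.mul (hhs.mul hφc.continuousOn)
  have hi3 : IntervalIntegrable (fun x => R x s * φ x) volume a b := by
    apply ContinuousOn.intervalIntegrable; rw [uIcc_of_le hab.le]
    exact hRs.mul hφc.continuousOn
  have hsplit : (∫ x in a..b, ((pdx (pdx h) x s * φ x + lam2 * (h x s * φ x))
          - (1 + lam2) * (h x s * φ x) + R x s * φ x))
      = (∫ x in a..b, (pdx (pdx h) x s * φ x + lam2 * (h x s * φ x)))
        - (1 + lam2) * (∫ x in a..b, h x s * φ x) + ∫ x in a..b, R x s * φ x := by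
    rw [intervalIntegral.integral_add (hi1.sub hi2) hi3, intervalIntegral.integral_sub hi1 hi2,
      intervalIntegral.integral_const_mul]
  rw [hcongr, hsplit, hFTC] at h1
  have e2 : (0 : ℝ) - (1 + lam2) * (∫ x in a..b, h x s * φ x) + (∫ x in a..b, R x s * φ x)
      = -(1 + lam2) * (∫ x in a..b, h x s * φ x) + ∫ x in a..b, R x s * φ x := by ring
  rwa [e2] at h1

set_option maxHeartbeats 2000000 in
open Real in
/-- Lemma 3.1 (in the case `n = 1`): for `q > 1` there exist `C > 0` and
`b = (1 - 1/q)/(2 - 1/q) ∈ (0,1)` such that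
`‖w(·,t)‖_{L^∞} ≤ C (1 + sup_{s ∈ (0,t)} ‖v_x(·,s)‖_{L^q}^b)` for all `t ∈ (0,T)`.
The supremum is expressed via an arbitrary upper bound `M`. -/
theorem w_Linf_bound_by_vx_Lq
    (a b κ Kf α : ℝ) (f u₀ v₀ w₀ : ℝ → ℝ)
    (hab : a < b) (hκ : 0 ≤ κ) (hKf : 0 < Kf)
    (hf_smooth : ContDiffOn ℝ 1 f (Ici 0))
    (hf_nonneg : ∀ s ∈ Ici (0 : ℝ), 0 ≤ f s)
    (hf_zero : f 0 = 0)
    (hf_growth : ∀ s : ℝ, 1 ≤ s → f s ≤ Kf * s ^ α)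
    (hu₀_cont : ContinuousOn u₀ (Icc a b)) (hu₀_nonneg : ∀ x ∈ Icc a b, 0 ≤ u₀ x)
    (hv₀_lip : ∃ L : NNReal, LipschitzOnWith L v₀ (Icc a b))
    (hv₀_nonneg : ∀ x ∈ Icc a b, 0 ≤ v₀ x)
    (hw₀_cont : ContinuousOn w₀ (Icc a b)) (hw₀_nonneg : ∀ x ∈ Icc a b, 0 ≤ w₀ x)
    (T : ℝ≥0∞) (hT : 0 < T) (u v w : ℝ → ℝ → ℝ)
    (hsol : IsClassicalSolutionP a b κ f u₀ v₀ w₀ T u v w)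
    (q : ℝ) (hq : 1 < q) :
    (1 - 1 / q) / (2 - 1 / q) ∈ Ioo (0 : ℝ) 1 ∧
    ∃ C > (0 : ℝ), ∀ t ∈ timeIoo T, ∀ M : ℝ,
      (∀ s ∈ Ioo 0 t, LqNorm a b q (fun x => pdx v x s) ≤ M) →
      LinfNorm a b (fun x => w x t) ≤ C * (1 + M ^ ((1 - 1 / q) / (2 - 1 / q))) := by
  have hq0 : (0:ℝ) < q := lt_trans one_pos hq
  have hb01 : (1 - 1 / q) / (2 - 1 / q) ∈ Ioo (0 : ℝ) 1 := by
    have h1 : 0 < 1 - 1 / q := by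
      have : 1 / q < 1 := by rw [div_lt_one hq0]; exact hq
      linarith
    have h2 : (0:ℝ) < 2 - 1 / q := by linarith
    exact ⟨div_pos h1 h2, by rw [div_lt_one h2]; linarith⟩
  refine ⟨hb01, ?_⟩
  have hL : (0:ℝ) < b - a := by linarith
  -- basic continuity facts
  have hfc : ContinuousOn f (Ici 0) := hf_smooth.continuousOn
  have hzeroIco : (0:ℝ) ∈ timeIco T := ⟨le_refl 0, by simpa using hT⟩
  have hfuw_cont : ∀ s ∈ timeIco T, ContinuousOn (fun x => f (u x s) * w x s) (Icc a b) := by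
    intro s hs
    exact (hfc.comp (sliceContOn hsol.u_cont hs)
      (fun x hx => hsol.u_nonneg x hx s hs)).mul (sliceContOn hsol.w_cont hs)
  -- choose t₁ ∈ (0,T)
  obtain ⟨t₁, ht₁⟩ : ∃ t₁, t₁ ∈ timeIoo T := by
    by_cases hTtop : T = ⊤
    · exact ⟨1, by norm_num, by simp [hTtop]⟩
    · refine ⟨T.toReal / 2, ?_, ?_⟩
      · have : 0 < T.toReal := ENNReal.toReal_pos hT.ne' hTtop
        linarith
      · have h0 : 0 < T.toReal := ENNReal.toReal_pos hT.ne' hTtop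
        exact (ENNReal.ofReal_lt_iff_lt_toReal (by linarith) hTtop).2 (by linarith)
  have ht₁pos : 0 < t₁ := ht₁.1
  -- the trivial test function facts
  have hφ1d : ∀ x : ℝ, HasDerivAt (fun _ : ℝ => (1:ℝ)) ((fun _ : ℝ => (0:ℝ)) x) x :=
    fun x => hasDerivAt_const x 1
  have hφ1dd : ∀ x : ℝ, HasDerivAt (fun _ : ℝ => (0:ℝ)) (-(0:ℝ) * (fun _ : ℝ => (1:ℝ)) x) x := by
    intro x
    simpa using hasDerivAt_const x (0:ℝ)
  -- mass integrals
  set Iu : ℝ → ℝ := fun s => ∫ x in a..b, u x s with hIudef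
  set Iv : ℝ → ℝ := fun s => ∫ x in a..b, v x s with hIvdef
  set Iw : ℝ → ℝ := fun s => ∫ x in a..b, w x s with hIwdef
  set G : ℝ → ℝ := fun s => ∫ x in a..b, f (u x s) * w x s with hGdef
  -- derivative of Iu + Iv
  have hIud : ∀ s ∈ timeIoo T,
      HasDerivAt (fun τ => Iu τ + Iv τ) (-1 * (Iu s + Iv s) + κ * (b - a)) s := by
    intro s hs
    have hsIco := timeIoo_subset_timeIco hs
    have hflux_cont : ContinuousOn
        (fun x => pdx (fun ξ τ => u ξ τ * pdx v ξ τ) x s) (Icc a b) := by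
      have hrhs : ContinuousOn (fun x => pdx (pdx u) x s - pdt u x s - u x s
          - f (u x s) * w x s + κ) (Icc a b) :=
        ((((sliceContOn hsol.u_xx_cont hs).sub (sliceContOn hsol.u_t_cont hs)).sub
          (sliceContOn hsol.u_cont hsIco)).sub (hfuw_cont s hsIco)).add continuousOn_const
      apply hrhs.congr
      intro x hx
      show pdx (fun ξ τ => u ξ τ * pdx v ξ τ) x s
          = pdx (pdx u) x s - pdt u x s - u x s - f (u x s) * w x s + κ
      have := hsol.eq_u x hx s hs
      linarith
    have hQ : (∫ x in a..b, pdx (fun ξ τ => u ξ τ * pdx v ξ τ) x s) = 0 := by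
      have hQd : ∀ x ∈ Icc a b, HasDerivAt (fun ξ => u ξ s * pdx v ξ s)
          (pdx (fun ξ τ => u ξ τ * pdx v ξ τ) x s) x := by
        intro x hx
        exact ((hsol.u_diff_x x hx s hs).mul (hsol.v_diff_xx x hx s hs)).hasDerivAt
      rw [integral_deriv_eq_sub' hab.le hQd hflux_cont]
      rw [(hsol.bc_v s hs).1, (hsol.bc_v s hs).2]
      ring
    have hint_fuw : IntervalIntegrable (fun x => f (u x s) * w x s) volume a b := by
      apply ContinuousOn.intervalIntegrable
      rw [uIcc_of_le hab.le]; exact hfuw_cont s hsIco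
    have hint_flux : IntervalIntegrable
        (fun x => pdx (fun ξ τ => u ξ τ * pdx v ξ τ) x s) volume a b := by
      apply ContinuousOn.intervalIntegrable
      rw [uIcc_of_le hab.le]; exact hflux_cont
    have hu := mode_deriv_general hab (T := T) (h := u)
      (R := fun x τ => κ - f (u x τ) * w x τ - pdx (fun ξ τ' => u ξ τ' * pdx v ξ τ') x τ)
      (φ := fun _ => (1:ℝ)) (φ' := fun _ => (0:ℝ)) (lam2 := 0)
      continuous_const continuous_const hφ1d hφ1dd rfl rfl
      hsol.u_cont hsol.u_t_cont hsol.u_xx_cont hsol.u_diff_t hsol.u_diff_x hsol.u_diff_xx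
      hsol.bc_u (fun x hx s' hs' => by rw [hsol.eq_u x hx s' hs']; ring) hs
      ((continuousOn_const.sub (hfuw_cont s hsIco)).sub hflux_cont)
    have hv := mode_deriv_general hab (T := T) (h := v) (R := fun x τ => f (u x τ) * w x τ)
      (φ := fun _ => (1:ℝ)) (φ' := fun _ => (0:ℝ)) (lam2 := 0)
      continuous_const continuous_const hφ1d hφ1dd rfl rfl
      hsol.v_cont hsol.v_t_cont hsol.v_xx_cont hsol.v_diff_t hsol.v_diff_x hsol.v_diff_xx
      hsol.bc_v (fun x hx s' hs' => by rw [hsol.eq_v x hx s' hs']) hs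
      (hfuw_cont s hsIco)
    simp only [mul_one] at hu hv
    have hRu : (∫ x in a..b,
        (κ - f (u x s) * w x s - pdx (fun ξ τ' => u ξ τ' * pdx v ξ τ') x s))
        = κ * (b - a) - G s := by
      rw [intervalIntegral.integral_sub ((intervalIntegrable_const).sub hint_fuw) hint_flux,
        intervalIntegral.integral_sub (intervalIntegrable_const) hint_fuw,
        intervalIntegral.integral_const, hQ]
      simp only [hGdef, smul_eq_mul]
      ring
    rw [hRu] at hu
    have hcomb := hu.add hv
    have e : -(1 + (0:ℝ)) * Iu s + (κ * (b - a) - G s) + (-(1 + (0:ℝ)) * Iv s + G s)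
        = -1 * (Iu s + Iv s) + κ * (b - a) := by ring
    rwa [e] at hcomb
  -- derivative of Iw
  have hIwd : ∀ s ∈ timeIoo T, HasDerivAt Iw (-1 * Iw s + Iv s) s := by
    intro s hs
    have hw := mode_deriv_general hab (T := T) (h := w) (R := fun x τ => v x τ)
      (φ := fun _ => (1:ℝ)) (φ' := fun _ => (0:ℝ)) (lam2 := 0)
      continuous_const continuous_const hφ1d hφ1dd rfl rfl
      hsol.w_cont hsol.w_t_cont hsol.w_xx_cont hsol.w_diff_t hsol.w_diff_x hsol.w_diff_xx
      hsol.bc_w (fun x hx s' hs' => by rw [hsol.eq_w x hx s' hs']) hs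
      (sliceContOn hsol.v_cont (timeIoo_subset_timeIco hs))
    simp only [mul_one] at hw
    have e : -(1 + (0:ℝ)) * Iw s + Iv s = -1 * Iw s + Iv s := by ring
    rwa [e] at hw
  -- nonnegativity of masses
  have hIu0 : ∀ s ∈ timeIco T, 0 ≤ Iu s := fun s hs =>
    intervalIntegral.integral_nonneg hab.le (fun x hx => hsol.u_nonneg x hx s hs)
  have hIv0 : ∀ s ∈ timeIco T, 0 ≤ Iv s := fun s hs =>
    intervalIntegral.integral_nonneg hab.le (fun x hx => hsol.v_nonneg x hx s hs)
  have hIw0 : ∀ s ∈ timeIco T, 0 ≤ Iw s := fun s hs =>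
    intervalIntegral.integral_nonneg hab.le (fun x hx => hsol.w_nonneg x hx s hs)
  -- continuity of masses
  have hmasscont : ∀ (h : ℝ → ℝ → ℝ),
      ContinuousOn (fun p : ℝ × ℝ => h p.1 p.2) (Icc a b ×ˢ timeIco T) →
      ∀ c d : ℝ, Icc c d ⊆ timeIco T →
      ContinuousOn (fun s => ∫ x in a..b, h x s) (Icc c d) := by
    intro h hc c d hsub
    have := continuousOn_param_integral hab.le continuous_const (φ := fun _ => (1:ℝ))
      (hc.mono (prod_mono_right hsub))
    simpa only [mul_one] using this
  -- mass bounds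
  set m₀ : ℝ := (Iu 0 + Iv 0) + κ * (b - a) with hm₀def
  have hm₀ : 0 ≤ m₀ := by
    have h3 : 0 ≤ κ * (b - a) := by positivity
    simp only [hm₀def]
    linarith [hIu0 0 hzeroIco, hIv0 0 hzeroIco]
  have hvmass : ∀ s ∈ timeIoo T, Iv s ≤ m₀ := by
    intro s hs
    have hsub : Icc 0 s ⊆ timeIco T := fun σ hσ => mem_timeIco_of_le hs hσ.1 hσ.2
    have hcont : ContinuousOn (fun τ => Iu τ + Iv τ) (Icc 0 s) :=
      (hmasscont u hsol.u_cont 0 s hsub).add (hmasscont v hsol.v_cont 0 s hsub)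
    have hY : ∀ σ ∈ Ioo 0 s, HasDerivAt (fun τ => Iu τ + Iv τ)
        (-1 * (Iu σ + Iv σ) + (fun _ : ℝ => κ * (b - a)) σ) σ := fun σ hσ =>
      hIud σ (mem_timeIoo_of_le hs hσ.1 hσ.2.le)
    have hcmp := ode_upper one_pos (by positivity : (0:ℝ) ≤ κ * (b - a)) hs.1.le hcont hY
      (fun σ _ => le_refl _)
    have hE : Real.exp (-1 * (s - 0)) ≤ 1 := by
      rw [Real.exp_le_one_iff]
      nlinarith [hs.1]
    have h0 : 0 ≤ Iu 0 + Iv 0 := add_nonneg (hIu0 0 hzeroIco) (hIv0 0 hzeroIco)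
    have hIvle : Iv s ≤ Iu s + Iv s := by linarith [hIu0 s (timeIoo_subset_timeIco hs)]
    have hdiv : κ * (b - a) / 1 = κ * (b - a) := div_one _
    rw [hdiv] at hcmp
    simp only [hm₀def]
    nlinarith
  set m₁ : ℝ := Iw 0 + m₀ with hm₁def
  have hm₁ : 0 ≤ m₁ := by
    simp only [hm₁def]; linarith [hIw0 0 hzeroIco]
  have hwmass : ∀ s ∈ timeIoo T, Iw s ≤ m₁ := by
    intro s hs
    have hsub : Icc 0 s ⊆ timeIco T := fun σ hσ => mem_timeIco_of_le hs hσ.1 hσ.2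
    have hcont : ContinuousOn Iw (Icc 0 s) := hmasscont w hsol.w_cont 0 s hsub
    have hY : ∀ σ ∈ Ioo 0 s, HasDerivAt Iw (-1 * Iw σ + Iv σ) σ := fun σ hσ =>
      hIwd σ (mem_timeIoo_of_le hs hσ.1 hσ.2.le)
    have hr : ∀ σ ∈ Ioo 0 s, Iv σ ≤ m₀ := fun σ hσ =>
      hvmass σ (mem_timeIoo_of_le hs hσ.1 hσ.2.le)
    have hcmp := ode_upper one_pos hm₀ hs.1.le hcont hY hr
    have hE : Real.exp (-1 * (s - 0)) ≤ 1 := by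
      rw [Real.exp_le_one_iff]
      nlinarith [hs.1]
    have hdiv : m₀ / 1 = m₀ := div_one _
    rw [hdiv] at hcmp
    simp only [hm₁def]
    nlinarith [hIw0 0 hzeroIco]
  -- cosine modes
  set lam : ℤ → ℝ := fun n => (n : ℝ) * π / (b - a) with hlamdef
  set A : ℤ → ℝ → ℝ := fun n s => ∫ x in a..b, w x s * Real.cos (lam n * (x - b)) with hAdef
  have hcoscont : ∀ n : ℤ, Continuous (fun x => Real.cos (lam n * (x - b))) := fun n =>
    Real.continuous_cos.comp (continuous_const.mul (continuous_id.sub continuous_const))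
  have hAd : ∀ n : ℤ, ∀ s ∈ timeIoo T, HasDerivAt (A n)
      (-(1 + (lam n)^2) * A n s + ∫ x in a..b, v x s * Real.cos (lam n * (x - b))) s := by
    intro n s hs
    have hinner : ∀ x : ℝ, HasDerivAt (fun x => lam n * (x - b)) (lam n) x := by
      intro x
      simpa using ((hasDerivAt_id x).sub_const b).const_mul (lam n)
    have hφd : ∀ x : ℝ, HasDerivAt (fun x => Real.cos (lam n * (x - b)))
        ((fun x => -lam n * Real.sin (lam n * (x - b))) x) x := by
      intro x
      have h := (hinner x).cos
      have e : -Real.sin (lam n * (x - b)) * lam n = -lam n * Real.sin (lam n * (x - b)) := by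
        ring
      rw [e] at h
      exact h
    have hφdd : ∀ x : ℝ, HasDerivAt (fun x => -lam n * Real.sin (lam n * (x - b)))
        (-(lam n)^2 * (fun x => Real.cos (lam n * (x - b))) x) x := by
      intro x
      have h := ((hinner x).sin).const_mul (-lam n)
      have e : -lam n * (Real.cos (lam n * (x - b)) * lam n)
          = -(lam n)^2 * Real.cos (lam n * (x - b)) := by ring
      rw [e] at h
      exact h
    have hφa : -lam n * Real.sin (lam n * (a - b)) = 0 := by
      have e : lam n * (a - b) = -((n : ℝ) * π) := by
        simp only [hlamdef]
        field_simp
        ring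
      rw [e, Real.sin_neg, Real.sin_int_mul_pi]
      ring
    have hφb : -lam n * Real.sin (lam n * (b - b)) = 0 := by
      simp
    exact mode_deriv_general hab (T := T) (h := w) (R := fun x τ => v x τ)
      (φ := fun x => Real.cos (lam n * (x - b)))
      (φ' := fun x => -lam n * Real.sin (lam n * (x - b))) (lam2 := (lam n)^2)
      (hcoscont n)
      (continuous_const.mul (Real.continuous_sin.comp
        (continuous_const.mul (continuous_id.sub continuous_const))))
      hφd hφdd hφa hφb
      hsol.w_cont hsol.w_t_cont hsol.w_xx_cont hsol.w_diff_t hsol.w_diff_x hsol.w_diff_xx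
      hsol.bc_w (fun x hx s' hs' => by rw [hsol.eq_w x hx s' hs']) hs
      (sliceContOn hsol.v_cont (timeIoo_subset_timeIco hs))
  set B : ℤ → ℝ := fun n =>
    Real.exp (-(lam n) ^ 2 * t₁) * m₁ + m₀ / (1 + (lam n) ^ 2) with hBdef
  -- the per-mode bound
  have hAwB : ∀ n : ℤ, ∀ σ ∈ timeIoo T, |A n σ| ≤ Iw σ := by
    intro n σ hσ
    have hσIco := timeIoo_subset_timeIco hσ
    have h2 := intervalIntegral.abs_integral_le_integral_abs (μ := volume)
      (f := fun x => w x σ * Real.cos (lam n * (x - b))) hab.le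
    apply le_trans h2
    apply intervalIntegral.integral_mono_on hab.le
    · apply ContinuousOn.intervalIntegrable
      rw [uIcc_of_le hab.le]
      exact ((sliceContOn hsol.w_cont hσIco).mul (hcoscont n).continuousOn).abs
    · apply ContinuousOn.intervalIntegrable
      rw [uIcc_of_le hab.le]
      exact sliceContOn hsol.w_cont hσIco
    · intro x hx
      rw [abs_mul, abs_of_nonneg (hsol.w_nonneg x hx σ hσIco)]
      have hc1 : |Real.cos (lam n * (x - b))| ≤ 1 := Real.abs_cos_le_one _
      nlinarith [hsol.w_nonneg x hx σ hσIco, abs_nonneg (Real.cos (lam n * (x - b)))]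
  have hAvB : ∀ n : ℤ, ∀ σ ∈ timeIoo T,
      |∫ x in a..b, v x σ * Real.cos (lam n * (x - b))| ≤ Iv σ := by
    intro n σ hσ
    have hσIco := timeIoo_subset_timeIco hσ
    have h2 := intervalIntegral.abs_integral_le_integral_abs (μ := volume)
      (f := fun x => v x σ * Real.cos (lam n * (x - b))) hab.le
    apply le_trans h2
    apply intervalIntegral.integral_mono_on hab.le
    · apply ContinuousOn.intervalIntegrable
      rw [uIcc_of_le hab.le]
      exact ((sliceContOn hsol.v_cont hσIco).mul (hcoscont n).continuousOn).abs
    · apply ContinuousOn.intervalIntegrable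
      rw [uIcc_of_le hab.le]
      exact sliceContOn hsol.v_cont hσIco
    · intro x hx
      rw [abs_mul, abs_of_nonneg (hsol.v_nonneg x hx σ hσIco)]
      have hc1 : |Real.cos (lam n * (x - b))| ≤ 1 := Real.abs_cos_le_one _
      nlinarith [hsol.v_nonneg x hx σ hσIco, abs_nonneg (Real.cos (lam n * (x - b)))]
  have hAbound : ∀ n : ℤ, ∀ t ∈ timeIoo T, t₁ < t → |A n t| ≤ B n := by
    intro n t ht htt
    have ht₀pos : 0 < t - t₁ := by linarith
    have ht₀mem : (t - t₁) ∈ timeIoo T := mem_timeIoo_of_le ht ht₀pos (by linarith)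
    have hμ : (0:ℝ) < 1 + (lam n)^2 := by positivity
    have hsub : Icc (t - t₁) t ⊆ timeIco T := fun σ hσ =>
      mem_timeIco_of_le ht (le_trans ht₀pos.le hσ.1) hσ.2
    have hcont : ContinuousOn (A n) (Icc (t - t₁) t) :=
      continuousOn_param_integral hab.le (hcoscont n)
        (hsol.w_cont.mono (prod_mono_right hsub))
    have hmem : ∀ σ ∈ Ioo (t - t₁) t, σ ∈ timeIoo T := fun σ hσ =>
      mem_timeIoo_of_le ht (lt_trans ht₀pos hσ.1) hσ.2.le
    have habs := ode_abs_bound hμ hm₀ (by linarith : t - t₁ ≤ t) hcont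
      (fun σ hσ => hAd n σ (hmem σ hσ))
      (fun σ hσ => le_trans (hAvB n σ (hmem σ hσ)) (hvmass σ (hmem σ hσ)))
    have hA0 : |A n (t - t₁)| ≤ m₁ := le_trans (hAwB n (t - t₁) ht₀mem) (hwmass _ ht₀mem)
    have hE1 : Real.exp (-(1 + (lam n)^2) * (t - (t - t₁)))
        = Real.exp (-(1 + (lam n)^2) * t₁) := by
      congr 1
      ring
    have hE2 : Real.exp (-(1 + (lam n)^2) * t₁) ≤ Real.exp (-(lam n)^2 * t₁) := by
      apply Real.exp_le_exp.2
      nlinarith [sq_nonneg (lam n), ht₁pos]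
    rw [hE1] at habs
    have hEpos : (0:ℝ) ≤ Real.exp (-(1 + (lam n)^2) * t₁) := (Real.exp_pos _).le
    simp only [hBdef]
    calc |A n t| ≤ Real.exp (-(1 + (lam n)^2) * t₁) * |A n (t - t₁)| + m₀ / (1 + (lam n)^2) :=
          habs
      _ ≤ Real.exp (-(lam n)^2 * t₁) * m₁ + m₀ / (1 + (lam n)^2) := by
          have h5 : Real.exp (-(1 + (lam n)^2) * t₁) * |A n (t - t₁)|
              ≤ Real.exp (-(lam n)^2 * t₁) * m₁ := by
            apply mul_le_mul hE2 hA0 (abs_nonneg _) (Real.exp_pos _).le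
          exact add_le_add h5 le_rfl
  -- summability
  have hBsum : Summable B := by
    have hc1 : (0:ℝ) < (π / (b - a))^2 * t₁ := by
      have := Real.pi_pos
      positivity
    have hc2 : (0:ℝ) < (π / (b - a))^2 := by
      have := Real.pi_pos
      positivity
    apply Summable.add
    · apply Summable.mul_right m₁
      apply Summable.congr (summable_exp_neg_int_sq hc1)
      intro n
      congr 1
      simp only [hlamdef]
      field_simp
    · have h6 := (summable_inv_one_add_int_sq hc2).mul_left m₀
      apply Summable.congr h6
      intro n
      rw [mul_one_div]
      congr 1
      simp only [hlamdef]
      field_simp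
  set C₃ : ℝ := (∑' n : ℤ, B n) / (b - a) with hC₃def
  have hC₃0 : 0 ≤ C₃ := by
    apply div_nonneg _ hL.le
    apply tsum_nonneg
    intro n
    simp only [hBdef]
    have h1 : 0 ≤ Real.exp (-(lam n) ^ 2 * t₁) * m₁ := mul_nonneg (Real.exp_pos _).le hm₁
    have h2 : 0 ≤ m₀ / (1 + (lam n) ^ 2) := div_nonneg hm₀ (by positivity)
    exact add_nonneg h1 h2
  have hfour : ∀ t ∈ timeIoo T, t₁ < t → ∀ x ∈ Icc a b, |w x t| ≤ C₃ := by
    intro t ht htt x hx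
    apply fourier_recon hab (sliceContOn hsol.w_cont (timeIoo_subset_timeIco ht)) hBsum _ hx
    intro n
    have h := hAbound n t ht htt
    have e : (∫ y in a..b, w y t * Real.cos ((n : ℝ) * π / (b - a) * (y - b))) = A n t := by
      simp only [hAdef, hlamdef]
    rw [e]
    exact h
  -- small-time bound by compactness
  obtain ⟨B₀, hB₀⟩ : ∃ B₀, ∀ x ∈ Icc a b, ∀ s ∈ Icc 0 t₁, |w x s| ≤ B₀ := by
    have hsub : Icc a b ×ˢ Icc 0 t₁ ⊆ Icc a b ×ˢ timeIco T :=
      prod_mono_right (fun s hs => mem_timeIco_of_le ht₁ hs.1 hs.2)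
    obtain ⟨C0, hC0⟩ := (isCompact_Icc.prod isCompact_Icc).exists_bound_of_continuousOn
      (hsol.w_cont.mono hsub)
    exact ⟨C0, fun x hx s hs => by
      have := hC0 (x, s) ⟨hx, hs⟩
      simpa [Real.norm_eq_abs] using this⟩
  have hB₀0 : 0 ≤ B₀ := le_trans (abs_nonneg _) (hB₀ a (left_mem_Icc.2 hab.le)
    0 (left_mem_Icc.2 ht₁pos.le))
  -- conclusion
  refine ⟨max B₀ C₃ + 1, by positivity, ?_⟩
  intro t ht M hM
  have hM0 : 0 ≤ M := by
    have h1 : (0:ℝ) ≤ LqNorm a b q (fun x => pdx v x (t / 2)) := by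
      apply Real.rpow_nonneg
      apply intervalIntegral.integral_nonneg hab.le
      intro x _
      exact Real.rpow_nonneg (abs_nonneg _) q
    exact le_trans h1 (hM (t / 2) ⟨by linarith [ht.1], by linarith [ht.1]⟩)
  have hwinf : ∀ x ∈ Icc a b, |w x t| ≤ max B₀ C₃ := by
    intro x hx
    by_cases hcase : t ≤ t₁
    · exact le_trans (hB₀ x hx t ⟨ht.1.le, hcase⟩) (le_max_left _ _)
    · push_neg at hcase
      exact le_trans (hfour t ht hcase x hx) (le_max_right _ _)
  have hlin : LinfNorm a b (fun x => w x t) ≤ max B₀ C₃ := by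
    apply Real.sSup_le _ (le_trans hB₀0 (le_max_left _ _))
    rintro y ⟨x, hx, rfl⟩
    exact hwinf x hx
  have hMb : 0 ≤ M ^ ((1 - 1 / q) / (2 - 1 / q)) := Real.rpow_nonneg hM0 _
  have hmax0 : 0 ≤ max B₀ C₃ := le_trans hB₀0 (le_max_left _ _)
  calc LinfNorm a b (fun x => w x t) ≤ max B₀ C₃ := hlin
    _ ≤ (max B₀ C₃ + 1) * (1 + M ^ ((1 - 1 / q) / (2 - 1 / q))) := by nlinarith
end
end

section
/- Let T ∈ (0,∞], b ∈ (0,1), C₁ > 0, C₂ > 0, and let F, G : (0,T) → [0,∞) be functions that are bounded on (0,t) for every t ∈ (0,T), such that for all t ∈ (0,T): F(t) ≤ C₁ (1 + sup_{s ∈ (0,t)} G(s)) and G(t) ≤ C₂ (1 + sup_{s ∈ (0,t)} F(s)^b). Then sup_{t ∈ (0,T)} F(t) < ∞ and sup_{t ∈ (0,T)} G(t) < ∞. -/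
open Set
open scoped ENNReal

private lemma sub_lin_bound {b K L x : ℝ} (hb0 : 0 < b) (hb1 : b < 1)
    (hK : 0 ≤ K) (hL : 0 ≤ L) (hx : 0 ≤ x) (h : x ≤ K + L * x ^ b) :
    x ≤ max 1 ((K + L) ^ (1 / (1 - b))) := by
  rcases le_or_gt x 1 with hx1 | hx1
  · exact le_trans hx1 (le_max_left _ _)
  · have hxpos : 0 < x := lt_trans one_pos hx1
    have hxb1 : (1 : ℝ) ≤ x ^ b := by
      have := Real.rpow_le_rpow (by norm_num : (0:ℝ) ≤ 1) hx1.le hb0.le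
      simpa using this
    have hxbpos : 0 < x ^ b := lt_of_lt_of_le one_pos hxb1
    have h2 : x ≤ (K + L) * x ^ b := by
      calc x ≤ K + L * x ^ b := h
        _ ≤ K * x ^ b + L * x ^ b := by nlinarith
        _ = (K + L) * x ^ b := by ring
    have h3 : x ^ (1 - b) ≤ K + L := by
      have hsplit : x ^ (1 - b) * x ^ b = x := by
        rw [← Real.rpow_add hxpos]
        simp
      have : x ^ (1 - b) * x ^ b ≤ (K + L) * x ^ b := by rw [hsplit]; exact h2
      exact le_of_mul_le_mul_right this hxbpos
    have h1b : (0 : ℝ) < 1 - b := by linarith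
    have h4 : (x ^ (1 - b)) ^ (1 / (1 - b)) ≤ (K + L) ^ (1 / (1 - b)) :=
      Real.rpow_le_rpow (Real.rpow_nonneg hxpos.le _) h3 (by positivity)
    have h5 : (x ^ (1 - b)) ^ (1 / (1 - b)) = x := by
      rw [← Real.rpow_mul hxpos.le, mul_one_div, div_self h1b.ne', Real.rpow_one]
    rw [h5] at h4
    exact le_trans h4 (le_max_right _ _)

/-- The abstract coupling argument underlying the proof of Lemma 3.3: two nonnegative,
locally bounded quantities `F, G` on `(0,T)` (with `T ∈ (0,∞]`, encoded as `T : ℝ≥0∞`),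
each controlled by the running supremum of the other (one only through a sublinear power
`b ∈ (0,1)`), are uniformly bounded on `(0,T)`. -/
theorem coupled_sup_bound (T : ℝ≥0∞) (hT : 0 < T) (b C₁ C₂ : ℝ)
    (hb : b ∈ Ioo (0 : ℝ) 1) (hC₁ : 0 < C₁) (hC₂ : 0 < C₂) (F G : ℝ → ℝ)
    (hF0 : ∀ t : ℝ, 0 < t → ENNReal.ofReal t < T → 0 ≤ F t)
    (hG0 : ∀ t : ℝ, 0 < t → ENNReal.ofReal t < T → 0 ≤ G t)
    (hFloc : ∀ t : ℝ, 0 < t → ENNReal.ofReal t < T → BddAbove (F '' Ioo 0 t))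
    (hGloc : ∀ t : ℝ, 0 < t → ENNReal.ofReal t < T → BddAbove (G '' Ioo 0 t))
    (hF : ∀ t : ℝ, 0 < t → ENNReal.ofReal t < T →
      F t ≤ C₁ * (1 + sSup (G '' Ioo 0 t)))
    (hG : ∀ t : ℝ, 0 < t → ENNReal.ofReal t < T →
      G t ≤ C₂ * (1 + sSup ((fun s => F s ^ b) '' Ioo 0 t))) :
    (∃ M : ℝ, ∀ t : ℝ, 0 < t → ENNReal.ofReal t < T → F t ≤ M) ∧
    (∃ M : ℝ, ∀ t : ℝ, 0 < t → ENNReal.ofReal t < T → G t ≤ M) := by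
  obtain ⟨hb0, hb1⟩ := hb
  set K : ℝ := C₁ * (1 + C₂) with hKdef
  set L : ℝ := C₁ * C₂ with hLdef
  have hK : 0 ≤ K := by positivity
  have hL : 0 ≤ L := by positivity
  set M : ℝ := max 1 ((K + L) ^ (1 / (1 - b))) with hMdef
  have hM0 : (0 : ℝ) ≤ M := le_trans zero_le_one (le_max_left _ _)
  -- membership helper
  have hmem : ∀ t : ℝ, ENNReal.ofReal t < T → ∀ s ∈ Ioo (0:ℝ) t,
      0 < s ∧ ENNReal.ofReal s < T := by
    intro t htT s hs
    exact ⟨hs.1, lt_of_le_of_lt (ENNReal.ofReal_le_ofReal hs.2.le) htT⟩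
  -- local sup bound for G in terms of sup of F on a larger interval
  have hGsup : ∀ t : ℝ, 0 < t → ENNReal.ofReal t < T → ∀ A : ℝ, 0 ≤ A →
      (∀ v ∈ Ioo (0:ℝ) t, F v ≤ A) → sSup (G '' Ioo 0 t) ≤ C₂ * (1 + A ^ b) := by
    intro t ht htT A hA hFA
    apply csSup_le ((nonempty_Ioo.mpr ht).image G)
    rintro y ⟨u, hu, rfl⟩
    obtain ⟨hu0, huT⟩ := hmem t htT u hu
    refine le_trans (hG u hu0 huT) ?_
    have hsup : sSup ((fun s => F s ^ b) '' Ioo 0 u) ≤ A ^ b := by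
      apply csSup_le ((nonempty_Ioo.mpr hu0).image _)
      rintro z ⟨v, hv, rfl⟩
      obtain ⟨hv0, hvT⟩ := hmem u huT v hv
      have hFv : F v ≤ A := hFA v ⟨hv.1, lt_trans hv.2 hu.2⟩
      exact Real.rpow_le_rpow (hF0 v hv0 hvT) hFv hb0.le
    nlinarith
  -- key : sup of F on (0,t) is at most M
  have key : ∀ t : ℝ, 0 < t → ENNReal.ofReal t < T → sSup (F '' Ioo 0 t) ≤ M := by
    intro t ht htT
    set H : ℝ := sSup (F '' Ioo 0 t) with hHdef
    have hH0 : 0 ≤ H := by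
      have hmem2 : t / 2 ∈ Ioo (0:ℝ) t := ⟨by linarith, by linarith⟩
      obtain ⟨h20, h2T⟩ := hmem t htT _ hmem2
      exact le_trans (hF0 _ h20 h2T) (le_csSup (hFloc t ht htT) ⟨_, hmem2, rfl⟩)
    have hself : H ≤ K + L * H ^ b := by
      apply csSup_le ((nonempty_Ioo.mpr ht).image F)
      rintro y ⟨s, hs, rfl⟩
      obtain ⟨hs0, hsT⟩ := hmem t htT s hs
      have h1 : F s ≤ C₁ * (1 + sSup (G '' Ioo 0 s)) := hF s hs0 hsT
      have h2 : sSup (G '' Ioo 0 s) ≤ C₂ * (1 + H ^ b) := by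
        apply hGsup s hs0 hsT H hH0
        intro v hv
        exact le_csSup (hFloc t ht htT) ⟨v, ⟨hv.1, lt_trans hv.2 hs.2⟩, rfl⟩
      have hHb : 0 ≤ H ^ b := Real.rpow_nonneg hH0 b
      calc F s ≤ C₁ * (1 + sSup (G '' Ioo 0 s)) := h1
        _ ≤ C₁ * (1 + C₂ * (1 + H ^ b)) := by nlinarith
        _ = K + L * H ^ b := by rw [hKdef, hLdef]; ring
    exact sub_lin_bound hb0 hb1 hK hL hH0 hself
  have hMb : 0 ≤ M ^ b := Real.rpow_nonneg hM0 b
  constructor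
  · refine ⟨C₁ * (1 + C₂ * (1 + M ^ b)), fun t ht htT => ?_⟩
    have h2 : sSup (G '' Ioo 0 t) ≤ C₂ * (1 + M ^ b) := by
      apply hGsup t ht htT M hM0
      intro v hv
      exact le_trans (le_csSup (hFloc t ht htT) ⟨v, hv, rfl⟩) (key t ht htT)
    have := hF t ht htT
    nlinarith
  · refine ⟨C₂ * (1 + M ^ b), fun t ht htT => ?_⟩
    refine le_trans (hG t ht htT) ?_
    have hsup : sSup ((fun s => F s ^ b) '' Ioo 0 t) ≤ M ^ b := by
      apply csSup_le ((nonempty_Ioo.mpr ht).image _)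
      rintro z ⟨v, hv, rfl⟩
      obtain ⟨hv0, hvT⟩ := hmem t htT v hv
      have hFv : F v ≤ M :=
        le_trans (le_csSup (hFloc t ht htT) ⟨v, hv, rfl⟩) (key t ht htT)
      exact Real.rpow_le_rpow (hF0 v hv0 hvT) hFv hb0.le
    nlinarith
end

section
/- Let (Ω, μ) be a finite measure space, let λ ∈ [1,∞), K > 0 and a ≥ 0 with λ·a ≤ 1, and let f : [0,∞) → [0,∞) be continuous with f(s) ≤ K s^a for all s ≥ 1. Let u : Ω → [0,∞) be measurable and integrable, and let w : Ω → [0,∞) be measurable and essentially bounded. Then ‖(f∘u)·w‖_{L^λ(μ)} ≤ ( K · μ(Ω)^{1/λ − a} · (∫_Ω u dμ)^a + (max_{s∈[0,1]} f(s)) · μ(Ω)^{1/λ} ) · ‖w‖_{L^∞(μ)}. -/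
open Set MeasureTheory
open scoped ENNReal

/-- The product estimate from the proof of Lemma 3.2: on a finite measure space, for
`λ ∈ [1,∞)`, `K > 0`, `a ≥ 0` with `λ a ≤ 1`, and continuous `f : [0,∞) → [0,∞)` with
`f(s) ≤ K s^a` for `s ≥ 1`, any integrable nonnegative `u` and essentially bounded
nonnegative `w` satisfy
`‖(f∘u) w‖_{L^λ} ≤ (K μ(Ω)^{1/λ - a} (∫ u)^a + (max_{[0,1]} f) μ(Ω)^{1/λ}) ‖w‖_{L^∞}`. -/
theorem product_Llambda_estimate {Ω : Type*} [MeasurableSpace Ω] (μ : Measure Ω)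
    [IsFiniteMeasure μ] (l K a : ℝ) (hl : 1 ≤ l) (hK : 0 < K) (ha : 0 ≤ a)
    (hla : l * a ≤ 1) (f : ℝ → ℝ) (hf_cont : ContinuousOn f (Ici 0))
    (hf_nonneg : ∀ s ∈ Ici (0 : ℝ), 0 ≤ f s)
    (hf_growth : ∀ s : ℝ, 1 ≤ s → f s ≤ K * s ^ a)
    (u : Ω → ℝ) (hu_meas : Measurable u) (hu_nonneg : ∀ x, 0 ≤ u x)
    (hu_int : Integrable u μ)
    (w : Ω → ℝ) (hw_meas : Measurable w) (hw_nonneg : ∀ x, 0 ≤ w x)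
    (hw_bdd : MemLp w ⊤ μ) :
    (∫ x, |f (u x) * w x| ^ l ∂μ) ^ (1 / l)
      ≤ (K * (μ univ).toReal ^ (1 / l - a) * (∫ x, u x ∂μ) ^ a
          + sSup (f '' Icc 0 1) * (μ univ).toReal ^ (1 / l))
        * (eLpNorm w ⊤ μ).toReal := by
  have hl0 : (0:ℝ) < l := lt_of_lt_of_le one_pos hl
  have hlne : l ≠ 0 := hl0.ne'
  -- measurability of f ∘ u
  have hfu_meas : Measurable fun x => f (u x) := by
    have hg : Measurable fun x : Ω => (⟨u x, hu_nonneg x⟩ : Ici (0:ℝ)) :=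
      hu_meas.subtype_mk
    exact (continuousOn_iff_continuous_restrict.mp hf_cont).measurable.comp hg
  -- the sup of f on [0,1]
  set M : ℝ := sSup (f '' Icc 0 1) with hM_def
  have hM_bdd : BddAbove (f '' Icc 0 1) :=
    (isCompact_Icc.image_of_continuousOn (hf_cont.mono Icc_subset_Ici_self)).bddAbove
  have hM_le : ∀ s ∈ Icc (0:ℝ) 1, f s ≤ M := fun s hs => le_csSup hM_bdd (mem_image_of_mem f hs)
  have hM0 : 0 ≤ M :=
    (hf_nonneg 0 self_mem_Ici).trans (hM_le 0 ⟨le_refl 0, zero_le_one⟩)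
  -- ENNReal versions
  set K' : ℝ≥0∞ := ENNReal.ofReal K with hK'_def
  set M' : ℝ≥0∞ := ENNReal.ofReal M with hM'_def
  set m' : ℝ≥0∞ := μ univ with hm'_def
  set U : Ω → ℝ≥0∞ := fun x => ENNReal.ofReal (u x) with hU_def
  set F : Ω → ℝ≥0∞ := fun x => ENNReal.ofReal (f (u x)) with hF_def
  set Wn : Ω → ℝ≥0∞ := fun x => ENNReal.ofReal (w x) with hWn_def
  set W' : ℝ≥0∞ := eLpNorm w ⊤ μ with hW'_def
  set I' : ℝ≥0∞ := ∫⁻ x, U x ∂μ with hI'_def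
  have hF_meas : Measurable F := hfu_meas.ennreal_ofReal
  have hU_meas : Measurable U := hu_meas.ennreal_ofReal
  have hm'_ne : m' ≠ ∞ := (measure_ne_top μ univ)
  have hK'_ne : K' ≠ ∞ := ENNReal.ofReal_ne_top
  have hW'_ne : W' ≠ ∞ := hw_bdd.2.ne
  have hI'_eq : I' = ENNReal.ofReal (∫ x, u x ∂μ) :=
    (MeasureTheory.ofReal_integral_eq_lintegral_ofReal hu_int
      (Filter.Eventually.of_forall hu_nonneg)).symm
  have hI'_ne : I' ≠ ∞ := by rw [hI'_eq]; exact ENNReal.ofReal_ne_top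
  -- pointwise bound on F
  have hFbound : ∀ x, F x ≤ K' * U x ^ a + M' := by
    intro x
    rcases le_or_gt 1 (u x) with h1 | h1
    · calc F x ≤ ENNReal.ofReal (K * u x ^ a) :=
            ENNReal.ofReal_le_ofReal (hf_growth _ h1)
        _ = K' * U x ^ a := by
            rw [ENNReal.ofReal_mul hK.le,
              ENNReal.ofReal_rpow_of_nonneg (hu_nonneg x) ha]
        _ ≤ _ := le_self_add
    · calc F x ≤ M' := ENNReal.ofReal_le_ofReal (hM_le _ ⟨hu_nonneg x, h1.le⟩)
        _ ≤ _ := le_add_self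
  -- a.e. bound on Wn
  have hWle : ∀ᵐ x ∂μ, Wn x ≤ W' := by
    filter_upwards [ae_le_eLpNormEssSup (f := w) (μ := μ)] with x hx
    rw [hW'_def, eLpNorm_exponent_top]
    calc Wn x = ‖w x‖ₑ := (Real.enorm_eq_ofReal (hw_nonneg x)).symm
      _ ≤ _ := hx
  -- Hölder step: ∫ U^(a*l) ≤ I'^(a*l) * m'^(1 - a*l)
  have hHolder : (∫⁻ x, U x ^ (a * l) ∂μ) ≤ I' ^ (a * l) * m' ^ (1 - a * l) := by
    set b : ℝ := a * l with hb_def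
    have hb0 : 0 ≤ b := mul_nonneg ha hl0.le
    have hb1 : b ≤ 1 := by rw [hb_def, mul_comm]; exact hla
    rcases eq_or_lt_of_le hb0 with hb0' | hb0'
    · simp [← hb0', lintegral_const, hm'_def]
    rcases eq_or_lt_of_le hb1 with hb1' | hb1'
    · simp [hb1', lintegral_const, hI'_def]
    · -- 0 < b < 1
      have hpq : Real.HolderConjugate (1 / b) (1 / (1 - b)) := by
        rw [Real.holderConjugate_iff]
        constructor
        · rw [lt_div_iff₀ hb0']; linarith
        · rw [one_div, one_div, inv_inv, inv_inv]; ring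
      have h := ENNReal.lintegral_mul_le_Lp_mul_Lq μ hpq
        ((hU_meas.pow_const b).aemeasurable) (aemeasurable_const (b := (1:ℝ≥0∞)))
      simp only [Pi.mul_apply, mul_one, ENNReal.one_rpow, lintegral_const] at h
      calc (∫⁻ x, U x ^ b ∂μ) ≤
          (∫⁻ x, (U x ^ b) ^ (1/b) ∂μ) ^ (1 / (1/b)) *
            (1 * m') ^ (1 / (1 / (1 - b))) := h
        _ = I' ^ b * m' ^ (1 - b) := by
            rw [one_mul]
            congr 1
            · rw [one_div_one_div]
              congr 1
              refine lintegral_congr fun x => ?_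
              rw [← ENNReal.rpow_mul, mul_one_div_cancel hb0'.ne', ENNReal.rpow_one]
            · rw [one_div_one_div]
  -- main ENNReal chain
  have main : (∫⁻ x, (F x * Wn x) ^ l ∂μ) ^ (1 / l)
      ≤ (K' * m' ^ (1 / l - a) * I' ^ a + M' * m' ^ (1 / l)) * W' := by
    have stepA : (∫⁻ x, (F x * Wn x) ^ l ∂μ) ≤ (∫⁻ x, F x ^ l ∂μ) * W' ^ l := by
      rw [← lintegral_mul_const _ (hF_meas.pow_const l)]
      refine lintegral_mono_ae ?_
      filter_upwards [hWle] with x hx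
      rw [ENNReal.mul_rpow_of_nonneg _ _ hl0.le]
      exact mul_le_mul_right (ENNReal.rpow_le_rpow hx hl0.le) _
    have stepB : (∫⁻ x, F x ^ l ∂μ) ≤ ∫⁻ x, (K' * U x ^ a + M') ^ l ∂μ :=
      lintegral_mono fun x => ENNReal.rpow_le_rpow (hFbound x) hl0.le
    have stepC : (∫⁻ x, (K' * U x ^ a + M') ^ l ∂μ) ^ (1 / l)
        ≤ K' * (∫⁻ x, U x ^ (a * l) ∂μ) ^ (1 / l) + M' * m' ^ (1 / l) := by
      have hmk := ENNReal.lintegral_Lp_add_le (μ := μ)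
          (f := fun x => K' * U x ^ a) (g := fun _ => M')
          ((hU_meas.pow_const a).const_mul K').aemeasurable aemeasurable_const hl
      simp only [Pi.add_apply] at hmk
      refine hmk.trans (le_of_eq ?_)
      congr 1
      · have : ∀ x, (K' * U x ^ a) ^ l = K' ^ l * U x ^ (a * l) := by
          intro x
          rw [ENNReal.mul_rpow_of_nonneg _ _ hl0.le, ← ENNReal.rpow_mul]
        simp_rw [this]
        rw [lintegral_const_mul' _ _ (ENNReal.rpow_ne_top_of_nonneg hl0.le hK'_ne),
          ENNReal.mul_rpow_of_nonneg _ _ (by positivity : (0:ℝ) ≤ 1 / l),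
          ← ENNReal.rpow_mul, mul_one_div_cancel hlne, ENNReal.rpow_one]
      · rw [lintegral_const,
          ENNReal.mul_rpow_of_nonneg _ _ (by positivity : (0:ℝ) ≤ 1 / l),
          ← ENNReal.rpow_mul, mul_one_div_cancel hlne, ENNReal.rpow_one]
    calc (∫⁻ x, (F x * Wn x) ^ l ∂μ) ^ (1 / l)
        ≤ ((∫⁻ x, F x ^ l ∂μ) * W' ^ l) ^ (1 / l) :=
          ENNReal.rpow_le_rpow stepA (by positivity)
      _ = (∫⁻ x, F x ^ l ∂μ) ^ (1 / l) * W' := by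
          rw [ENNReal.mul_rpow_of_nonneg _ _ (by positivity : (0:ℝ) ≤ 1 / l),
            ← ENNReal.rpow_mul, mul_one_div_cancel hlne, ENNReal.rpow_one]
      _ ≤ ((∫⁻ x, (K' * U x ^ a + M') ^ l ∂μ) ^ (1 / l)) * W' :=
          mul_le_mul_left (ENNReal.rpow_le_rpow stepB (by positivity)) _
      _ ≤ (K' * (∫⁻ x, U x ^ (a * l) ∂μ) ^ (1 / l) + M' * m' ^ (1 / l)) * W' :=
          mul_le_mul_left stepC _
      _ ≤ (K' * (I' ^ (a * l) * m' ^ (1 - a * l)) ^ (1 / l) + M' * m' ^ (1 / l)) * W' := by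
          gcongr
      _ = (K' * m' ^ (1 / l - a) * I' ^ a + M' * m' ^ (1 / l)) * W' := by
          congr 2
          rw [ENNReal.mul_rpow_of_nonneg _ _ (by positivity : (0:ℝ) ≤ 1 / l),
            ← ENNReal.rpow_mul, ← ENNReal.rpow_mul]
          have h1 : a * l * (1 / l) = a := by field_simp
          have h2 : (1 - a * l) * (1 / l) = 1 / l - a := by field_simp
          rw [h1, h2, mul_comm (I' ^ a) _, mul_assoc]
  -- convert to real numbers
  have hfw_nonneg : ∀ x, 0 ≤ f (u x) * w x := fun x =>
    mul_nonneg (hf_nonneg _ (hu_nonneg x)) (hw_nonneg x)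
  have hLHS : (∫ x, |f (u x) * w x| ^ l ∂μ)
      = (∫⁻ x, (F x * Wn x) ^ l ∂μ).toReal := by
    rw [MeasureTheory.integral_eq_lintegral_of_nonneg_ae (f := fun x => |f (u x) * w x| ^ l)
      (Filter.Eventually.of_forall fun x => Real.rpow_nonneg (abs_nonneg _) l)
      ((((hfu_meas.mul hw_meas : Measurable fun x => f (u x) * w x)).abs.pow_const l).aestronglyMeasurable)]
    congr 1
    refine lintegral_congr fun x => ?_
    rw [abs_of_nonneg (hfw_nonneg x),
      ← ENNReal.ofReal_rpow_of_nonneg (hfw_nonneg x) hl0.le,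
      ENNReal.ofReal_mul (hf_nonneg _ (hu_nonneg x))]
  have hRHS_ne : (K' * m' ^ (1 / l - a) * I' ^ a + M' * m' ^ (1 / l)) * W' ≠ ∞ := by
    apply ENNReal.mul_ne_top _ hW'_ne
    apply ENNReal.add_ne_top.mpr
    constructor
    · exact ENNReal.mul_ne_top
        (ENNReal.mul_ne_top hK'_ne (ENNReal.rpow_ne_top_of_nonneg (by rw [sub_nonneg, le_div_iff₀ hl0]; linarith : (0:ℝ) ≤ 1 / l - a) hm'_ne))
        (ENNReal.rpow_ne_top_of_nonneg ha hI'_ne)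
    · exact ENNReal.mul_ne_top ENNReal.ofReal_ne_top
        (ENNReal.rpow_ne_top_of_nonneg (by positivity) hm'_ne)
  have hfin := ENNReal.toReal_mono hRHS_ne main
  rw [← ENNReal.toReal_rpow] at hfin
  rw [hLHS]
  refine hfin.trans (le_of_eq ?_)
  rw [ENNReal.toReal_mul, ENNReal.toReal_add, ENNReal.toReal_mul, ENNReal.toReal_mul,
    ENNReal.toReal_mul, ← ENNReal.toReal_rpow, ← ENNReal.toReal_rpow, ← ENNReal.toReal_rpow,
    hI'_eq, ENNReal.toReal_ofReal (integral_nonneg hu_nonneg),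
    hK'_def, ENNReal.toReal_ofReal hK.le, hM'_def, ENNReal.toReal_ofReal hM0]
  · exact ENNReal.mul_ne_top
      (ENNReal.mul_ne_top hK'_ne (ENNReal.rpow_ne_top_of_nonneg
        (by rw [sub_nonneg, le_div_iff₀ hl0]; linarith : (0:ℝ) ≤ 1 / l - a) hm'_ne))
      (ENNReal.rpow_ne_top_of_nonneg ha hI'_ne)
  · exact ENNReal.mul_ne_top ENNReal.ofReal_ne_top
      (ENNReal.rpow_ne_top_of_nonneg (by positivity) hm'_ne)
end
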